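/- arXiv:2402.18384 — 5 statements merged into one kernel-verified Lean document; each statement's English description precedes it below -/
import Mathlib

section
/- Let f and g be tropical polynomials in n variables. Then Trop(f) ⊆ Trop(g) if and only if the Newton polyhedron N(f) ⊆ ℝ^{n+1} is totally inscribable in N(g), i.e. for every vertex (extreme point) v of N(g) there exist a real number t > 0 and a translation s : ℝ^{n+1} → ℝ^{n+1} such that v ∈ s(t·N(f)) and s(t·N(f)) ⊆ N(g). -/
open Finset

/-- A tropical polynomial in `n` variables: `k ≥ 1` monomials with exponent
vectors `a i : Fin n → ℕ` and coefficients `c i : ℝ`, the pairs `(a i, c i)`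
being pairwise distinct. -/
structure TropPoly (n : ℕ) where
  k : ℕ
  hk : 0 < k
  a : Fin k → Fin n → ℕ
  c : Fin k → ℝ
  distinct : Function.Injective (fun i => (a i, c i))

namespace TropPoly

variable {n : ℕ}

/-- Value of the `i`-th tropical monomial at `x`: `⟨a i, x⟩ + c i`. -/
def mono (f : TropPoly n) (i : Fin f.k) (x : Fin n → ℝ) : ℝ :=
  (∑ j, (f.a i j : ℝ) * x j) + f.c i

/-- Value of the tropical polynomial: `f(x) = min_i (⟨a i, x⟩ + c i)`. -/
def eval (f : TropPoly n) (x : Fin n → ℝ) : ℝ :=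
  Finset.univ.inf' ⟨⟨0, f.hk⟩, Finset.mem_univ _⟩ (fun i => f.mono i x)

/-- The tropical hypersurface `Trop(f)`: points where the minimum is attained
at least at two distinct monomials. -/
def tropSet (f : TropPoly n) : Set (Fin n → ℝ) :=
  {x | ∃ i j : Fin f.k, i ≠ j ∧ f.mono i x = f.eval x ∧ f.mono j x = f.eval x}

/-- The Newton polyhedron `N(f) ⊆ ℝ^{n+1}`: the convex hull of the union of
the vertical rays `{(a i, c) : c ≥ c i}`. -/
def newton (f : TropPoly n) : Set ((Fin n → ℝ) × ℝ) :=
  convexHull ℝ {p | ∃ i : Fin f.k, p.1 = (fun j => (f.a i j : ℝ)) ∧ f.c i ≤ p.2}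

end TropPoly

/-- The linear functional `φ_x(z, a) = ⟨x, z⟩ + a` on `ℝ^{n+1}`. -/
def phi {n : ℕ} (x : Fin n → ℝ) (p : (Fin n → ℝ) × ℝ) : ℝ :=
  (∑ j, x j * p.1 j) + p.2

/-- The convex cone generated by a set `S`: all nonnegative linear
combinations of elements of `S`. -/
def coneGen {E : Type*} [AddCommMonoid E] [Module ℝ E] (S : Set E) : Set E :=
  {y | ∃ (m : ℕ) (t : Fin m → ℝ) (p : Fin m → E),
    (∀ i, 0 ≤ t i) ∧ (∀ i, p i ∈ S) ∧ y = ∑ i, t i • p i}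

section Aux
open TropPoly

variable {n : ℕ}

/-- the apex of the i-th ray -/
def apex (f : TropPoly n) (i : Fin f.k) : (Fin n → ℝ) × ℝ :=
  ((fun j => (f.a i j : ℝ)), f.c i)

lemma phi_apex (f : TropPoly n) (i : Fin f.k) (x : Fin n → ℝ) :
    phi x (apex f i) = f.mono i x := by
  simp only [phi, apex, TropPoly.mono]
  congr 1
  exact Finset.sum_congr rfl fun j _ => mul_comm _ _

lemma apex_injective (f : TropPoly n) : Function.Injective (apex f) := by
  intro i j h
  apply f.distinct
  simp only [apex, Prod.mk.injEq] at h
  have h1 : f.a i = f.a j := by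
    funext m
    have := congrFun h.1 m
    exact_mod_cast this
  simp [h1, h.2]

lemma isLinearMap_phi (x : Fin n → ℝ) : IsLinearMap ℝ (phi x) := by
  constructor
  · intro p q
    simp [phi, mul_add, Finset.sum_add_distrib]; ring
  · intro c p
    have h : ∀ j ∈ Finset.univ, x j * (c • p).1 j = c * (x j * p.1 j) := fun j _ => by
      simp only [Prod.smul_fst, Pi.smul_apply, smul_eq_mul]; ring
    show phi x (c • p) = c * phi x p
    rw [phi, phi, Finset.sum_congr rfl h, ← Finset.mul_sum]
    simp only [Prod.smul_snd, smul_eq_mul]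
    ring

lemma phi_add (x : Fin n → ℝ) (p q) : phi x (p + q) = phi x p + phi x q :=
  (isLinearMap_phi x).map_add p q

lemma phi_smul (x : Fin n → ℝ) (c : ℝ) (p) : phi x (c • p) = c * phi x p :=
  (isLinearMap_phi x).map_smul c p

lemma eval_le (f : TropPoly n) (i : Fin f.k) (x) : f.eval x ≤ f.mono i x :=
  Finset.inf'_le _ (Finset.mem_univ i)

lemma exists_eval_eq (f : TropPoly n) (x) : ∃ i, f.mono i x = f.eval x := by
  obtain ⟨i, _, h⟩ := Finset.exists_mem_eq_inf' (α := ℝ)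
    ⟨(⟨0, f.hk⟩ : Fin f.k), Finset.mem_univ _⟩ (fun i => f.mono i x)
  exact ⟨i, h.symm⟩

/-- the generating set of the Newton polyhedron -/
def gen (f : TropPoly n) : Set ((Fin n → ℝ) × ℝ) :=
  {p | ∃ i : Fin f.k, p.1 = (fun j => (f.a i j : ℝ)) ∧ f.c i ≤ p.2}

lemma newton_eq_hull (f : TropPoly n) : f.newton = convexHull ℝ (gen f) := rfl

lemma mem_gen_iff (f : TropPoly n) (p : (Fin n → ℝ) × ℝ) :
    p ∈ gen f ↔ ∃ i : Fin f.k, ∃ s : ℝ, 0 ≤ s ∧ p = apex f i + ((0 : Fin n → ℝ), s) := by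
  constructor
  · rintro ⟨i, h1, h2⟩
    refine ⟨i, p.2 - f.c i, by linarith, ?_⟩
    ext <;> simp [apex, h1]
  · rintro ⟨i, s, hs, rfl⟩
    exact ⟨i, by ext j <;> simp [apex], by simp [apex]; linarith⟩

lemma apex_mem_gen (f : TropPoly n) (i : Fin f.k) : apex f i ∈ gen f :=
  (mem_gen_iff f _).2 ⟨i, 0, le_refl _, by simp⟩

lemma apex_mem_newton (f : TropPoly n) (i : Fin f.k) : apex f i ∈ f.newton :=
  subset_convexHull ℝ _ (apex_mem_gen f i)

lemma eval_le_phi (f : TropPoly n) (x : Fin n → ℝ) {p} (hp : p ∈ f.newton) :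
    f.eval x ≤ phi x p := by
  have hconv : Convex ℝ {q : (Fin n → ℝ) × ℝ | f.eval x ≤ phi x q} :=
    convex_halfSpace_ge (isLinearMap_phi x) (f.eval x)
  refine convexHull_min ?_ hconv hp
  rintro q hq
  obtain ⟨i, s, hs, rfl⟩ := (mem_gen_iff f q).1 hq
  have : phi x ((0 : Fin n → ℝ), s) = s := by simp [phi]
  simp only [Set.mem_setOf_eq, phi_add, this, phi_apex]
  have := eval_le f i x
  linarith

end Aux
section Aux2
open TropPoly Pointwise

variable {n : ℕ}

/-- vertical ray -/
def vray (n : ℕ) : Set ((Fin n → ℝ) × ℝ) := {q | q.1 = 0 ∧ 0 ≤ q.2}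

lemma convex_vray : Convex ℝ (vray n) := by
  rintro p ⟨hp1, hp2⟩ q ⟨hq1, hq2⟩ a b ha hb _
  constructor
  · show a • p.1 + b • q.1 = 0
    rw [hp1, hq1]; simp
  · show 0 ≤ a * p.2 + b * q.2
    positivity

lemma isClosed_vray : IsClosed (vray n) := by
  have h1 : IsClosed {q : (Fin n → ℝ) × ℝ | q.1 = 0} :=
    isClosed_eq continuous_fst continuous_const
  have h2 : IsClosed {q : (Fin n → ℝ) × ℝ | 0 ≤ q.2} :=
    isClosed_le continuous_const continuous_snd
  exact h1.inter h2

lemma gen_eq (f : TropPoly n) : gen f = Set.range (apex f) + vray n := by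
  ext p
  rw [mem_gen_iff]
  constructor
  · rintro ⟨i, s, hs, rfl⟩
    exact ⟨apex f i, ⟨i, rfl⟩, ((0 : Fin n → ℝ), s), ⟨rfl, hs⟩, rfl⟩
  · rintro ⟨q, ⟨i, rfl⟩, r, ⟨h1, h2⟩, rfl⟩
    exact ⟨i, r.2, h2, by rw [show r = ((0 : Fin n → ℝ), r.2) from Prod.ext h1 rfl]⟩

lemma newton_eq (f : TropPoly n) :
    f.newton = convexHull ℝ (Set.range (apex f)) + vray n := by
  rw [newton_eq_hull, gen_eq, convexHull_add, convex_vray.convexHull_eq]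

lemma isClosed_newton (f : TropPoly n) : IsClosed f.newton := by
  rw [newton_eq]
  exact IsClosed.add_left_of_isCompact isClosed_vray
    ((Set.finite_range _).isCompact_convexHull ℝ)

lemma convex_newton (f : TropPoly n) : Convex ℝ f.newton :=
  convex_convexHull ℝ _

/-- decomposition of a continuous linear functional on `ℝⁿ × ℝ` -/
lemma clm_decomp (ℓ : ((Fin n → ℝ) × ℝ) →L[ℝ] ℝ) (p : (Fin n → ℝ) × ℝ) :
    ℓ p = (∑ j, p.1 j * ℓ ((Pi.single j 1 : Fin n → ℝ), 0))
      + p.2 * ℓ ((0 : Fin n → ℝ), 1) := by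
  have hp : p = (∑ j, p.1 j • (((Pi.single j 1 : Fin n → ℝ), (0 : ℝ))))
      + p.2 • (((0 : Fin n → ℝ)), (1 : ℝ)) := by
    ext
    · show p.1 _ = ((∑ j, p.1 j • (((Pi.single j 1 : Fin n → ℝ), (0 : ℝ)))).1
        + p.2 • (0 : Fin n → ℝ)) _
      rw [Prod.fst_sum]
      simp only [Prod.smul_fst, smul_zero, add_zero, Pi.add_apply]
      rw [show (∑ j, p.1 j • ((Pi.single j 1 : Fin n → ℝ))) = ∑ j, Pi.single j (p.1 j) by
        refine Finset.sum_congr rfl fun j _ => ?_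
        rw [← Pi.single_smul, smul_eq_mul, mul_one]]
      rw [Finset.univ_sum_single p.1]
      simp
    · show p.2 = ((∑ j, p.1 j • (((Pi.single j 1 : Fin n → ℝ), (0 : ℝ)))).2 + p.2 • (1 : ℝ))
      rw [Prod.snd_sum]
      simp
  conv_lhs => rw [hp]
  rw [map_add, map_sum, map_smul]
  simp only [map_smul, smul_eq_mul]

lemma phi_lam (ℓ : ((Fin n → ℝ) × ℝ) →L[ℝ] ℝ) {lam : ℝ} (hlam : lam ≠ 0)
    (q : (Fin n → ℝ) × ℝ) :
    lam * phi (fun j => ℓ ((Pi.single j 1 : Fin n → ℝ), 0) / lam) q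
      = ℓ q + (lam - ℓ ((0 : Fin n → ℝ), 1)) * q.2 := by
  rw [phi, clm_decomp ℓ q, mul_add, Finset.mul_sum]
  rw [Finset.sum_congr rfl (fun j _ => by field_simp :
    ∀ j ∈ Finset.univ, lam * (ℓ ((Pi.single j 1 : Fin n → ℝ), 0) / lam * q.1 j)
      = q.1 j * ℓ ((Pi.single j 1 : Fin n → ℝ), 0))]
  ring

/-- the dual description of the Newton polyhedron -/
lemma mem_newton_iff (f : TropPoly n) (p : (Fin n → ℝ) × ℝ) :
    p ∈ f.newton ↔ ∀ x, f.eval x ≤ phi x p := by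
  refine ⟨fun hp x => eval_le_phi f x hp, fun h => ?_⟩
  by_contra hp
  obtain ⟨ℓ, u, hpu, hub⟩ :=
    geometric_hahn_banach_point_closed (convex_newton f) (isClosed_newton f) hp
  set lam := ℓ ((0 : Fin n → ℝ), 1) with hlamdef
  -- lam is nonnegative
  have hray : ∀ s : ℝ, 0 ≤ s → u < ℓ (apex f ⟨0, f.hk⟩) + s * lam := by
    intro s hs
    have hmem : apex f ⟨0, f.hk⟩ + ((0 : Fin n → ℝ), s) ∈ f.newton :=
      subset_convexHull ℝ _ ((mem_gen_iff f _).2 ⟨⟨0, f.hk⟩, s, hs, rfl⟩)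
    have := hub _ hmem
    rwa [map_add, show ℓ ((0 : Fin n → ℝ), s) = s * lam by
      rw [clm_decomp]; simp; exact Or.inl hlamdef.symm] at this
  have hlam : 0 ≤ lam := by
    by_contra hneg
    push_neg at hneg
    have hgap : 0 < ℓ (apex f ⟨0, f.hk⟩) - u + 1 := by
      have := hub _ (apex_mem_newton f ⟨0, f.hk⟩)
      linarith
    set s := (ℓ (apex f ⟨0, f.hk⟩) - u + 1) / (-lam) with hs
    have hs0 : 0 ≤ s := div_nonneg (le_of_lt hgap) (by linarith)
    have h1 := hray s hs0
    have h2 : s * lam = -(ℓ (apex f ⟨0, f.hk⟩) - u + 1) := by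
      rw [hs, div_mul_eq_mul_div, mul_div_assoc, div_neg, div_self (ne_of_lt hneg)]
      ring
    rw [h2] at h1
    linarith
  -- choose epsilon
  have key : ∃ ε : ℝ, 0 < ε ∧ ∀ i : Fin f.k, ℓ p + ε * p.2 < ℓ (apex f i) + ε * f.c i := by
    have hne : (Finset.univ : Finset (Fin f.k)).Nonempty := ⟨⟨0, f.hk⟩, Finset.mem_univ _⟩
    set ε := Finset.univ.inf' hne (fun i => (ℓ (apex f i) - u) / (1 + |p.2 - f.c i|)) with hε
    refine ⟨ε, ?_, ?_⟩
    · rw [hε, Finset.lt_inf'_iff]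
      intro i _
      have := hub _ (apex_mem_newton f i)
      have h2 : (0:ℝ) < 1 + |p.2 - f.c i| := by positivity
      exact div_pos (by linarith) h2
    · intro i
      have h1 : ε ≤ (ℓ (apex f i) - u) / (1 + |p.2 - f.c i|) :=
        Finset.inf'_le _ (Finset.mem_univ i)
      have h2 : (0:ℝ) < 1 + |p.2 - f.c i| := by positivity
      have h3 : 0 < ε := by
        rw [hε, Finset.lt_inf'_iff]
        intro i _
        have := hub _ (apex_mem_newton f i)
        have h2' : (0:ℝ) < 1 + |p.2 - f.c i| := by positivity
        exact div_pos (by linarith) h2'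
      have h4 : ε * (p.2 - f.c i) ≤ ε * |p.2 - f.c i| := by
        have := le_abs_self (p.2 - f.c i)
        nlinarith
      have h5 : ε * |p.2 - f.c i| < ℓ (apex f i) - u := by
        have h6 : ε * (1 + |p.2 - f.c i|) ≤ ℓ (apex f i) - u := by
          rw [← le_div_iff₀ h2]
          exact h1
        nlinarith
      have h7 := hub _ (apex_mem_newton f i)
      nlinarith [hpu]
  obtain ⟨ε, hε, hkey⟩ := key
  set lam' := lam + ε with hlam'
  have hlam'pos : 0 < lam' := by positivity
  set x₁ : Fin n → ℝ := fun j => ℓ ((Pi.single j 1 : Fin n → ℝ), 0) / lam' with hx₁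
  have hq : ∀ q : (Fin n → ℝ) × ℝ, lam' * phi x₁ q = ℓ q + ε * q.2 := by
    intro q
    rw [hx₁, phi_lam ℓ (ne_of_gt hlam'pos) q]
    rw [hlam']
    ring_nf
    rw [hlamdef]; ring
  -- contradiction with h x₁
  obtain ⟨i, hi⟩ := exists_eval_eq f x₁
  have h1 : f.eval x₁ ≤ phi x₁ p := h x₁
  have h2 : lam' * f.mono i x₁ = ℓ (apex f i) + ε * f.c i := by
    rw [← phi_apex f i x₁, hq]
    simp [apex]
  have h3 := hkey i
  have h4 : lam' * phi x₁ p < lam' * f.mono i x₁ := by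
    rw [hq, h2]
    simpa [hq] using h3
  have h5 : phi x₁ p < f.mono i x₁ := lt_of_mul_lt_mul_left h4 (le_of_lt hlam'pos)
  rw [hi] at h5
  linarith

/-- ray stability of the Newton polyhedron -/
lemma newton_ray (f : TropPoly n) {p} (hp : p ∈ f.newton) {s : ℝ} (hs : 0 ≤ s) :
    p + ((0 : Fin n → ℝ), s) ∈ f.newton := by
  rw [mem_newton_iff] at hp ⊢
  intro x
  have := hp x
  rw [phi_add]
  have : phi x ((0 : Fin n → ℝ), s) = s := by simp [phi]
  rw [this]
  have := hp x
  linarith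

end Aux2
section Aux3
open TropPoly Pointwise

variable {n : ℕ}

lemma extreme_restrict {X : Type*} [AddCommGroup X] [Module ℝ X] {s t : Set X}
    {v : X} (h : v ∈ Set.extremePoints ℝ t) (hs : s ⊆ t) (hv : v ∈ s) :
    v ∈ Set.extremePoints ℝ s :=
  ⟨hv, fun x hx y hy hseg => h.2 (hs hx) (hs hy) hseg⟩

lemma conv_apex_subset (g : TropPoly n) :
    convexHull ℝ (Set.range (apex g)) ⊆ g.newton :=
  convexHull_mono (fun p ⟨i, hi⟩ => hi ▸ apex_mem_gen g i)

lemma extreme_apex (g : TropPoly n) {v} (hv : v ∈ Set.extremePoints ℝ g.newton) :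
    ∃ i₀ : Fin g.k, v = apex g i₀ ∧
      ∃ x₀ : Fin n → ℝ, ∀ j, j ≠ i₀ → g.mono i₀ x₀ < g.mono j x₀ := by
  -- step 1 : v is an apex
  have hvN : v ∈ g.newton := hv.1
  have hvA : v ∈ convexHull ℝ (Set.range (apex g)) := by
    rw [newton_eq] at hvN
    obtain ⟨q, hq, r, ⟨hr1, hr2⟩, hqr⟩ := hvN
    have hqr' : q + r = v := hqr
    rcases eq_or_lt_of_le hr2 with h0 | hpos
    · have hr0 : r = 0 := Prod.ext hr1 h0.symm
      rw [hr0, add_zero] at hqr'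
      rwa [← hqr']
    · exfalso
      have hqN : q ∈ g.newton := conv_apex_subset g hq
      have hq2 : q + ((0 : Fin n → ℝ), 2 * r.2) ∈ g.newton :=
        newton_ray g hqN (by linarith)
      have hrrep : r = ((0 : Fin n → ℝ), r.2) := Prod.ext hr1 rfl
      have hseg : v ∈ openSegment ℝ q (q + ((0 : Fin n → ℝ), 2 * r.2)) := by
        refine ⟨1/2, 1/2, by norm_num, by norm_num, by norm_num, ?_⟩
        have h2r : ((0 : Fin n → ℝ), 2 * r.2) = (2:ℝ) • r := by
          rw [hrrep]
          exact Prod.ext (by simp) rfl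
        rw [h2r, ← hqr']
        module
      have hq1 := hv.2 (conv_apex_subset g hq) hq2 hseg
      rw [hq1] at hqr'
      have : r.2 = 0 := by
        have h5 := congrArg Prod.snd hqr'
        simp at h5
        linarith
      linarith
  have hvRange : v ∈ Set.range (apex g) :=
    extremePoints_convexHull_subset (extreme_restrict hv (conv_apex_subset g) hvA)
  obtain ⟨i₀, hi₀⟩ := hvRange
  refine ⟨i₀, hi₀.symm, ?_⟩
  -- step 2 : separate v from the other apexes and v + e
  set e : (Fin n → ℝ) × ℝ := ((0 : Fin n → ℝ), (1 : ℝ)) with he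
  set D : Set ((Fin n → ℝ) × ℝ) := (Set.range (apex g) \ {v}) ∪ {v + e} with hD
  have hDfin : D.Finite := ((Set.finite_range _).diff).union (Set.finite_singleton _)
  have hDN : D ⊆ g.newton := by
    rintro p (⟨⟨i, rfl⟩, -⟩ | hp)
    · exact apex_mem_newton g i
    · rw [Set.mem_singleton_iff] at hp
      rw [hp]
      exact newton_ray g hv.1 zero_le_one
  have hvD : v ∉ convexHull ℝ D := by
    intro hmem
    have := extremePoints_convexHull_subset
      (extreme_restrict hv ((convexHull_min hDN (convex_newton g)) :
        convexHull ℝ D ⊆ g.newton) hmem)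
    rcases this with ⟨-, hne⟩ | hsing
    · exact hne rfl
    · rw [Set.mem_singleton_iff] at hsing
      have := congrArg Prod.snd hsing
      simp [he] at this
  obtain ⟨ℓ, u, hvu, hub⟩ := geometric_hahn_banach_point_closed
    (convex_convexHull ℝ D) ((hDfin.isCompact_convexHull ℝ).isClosed) hvD
  set lam := ℓ ((0 : Fin n → ℝ), 1) with hlam
  have hlampos : 0 < lam := by
    have hve : v + e ∈ convexHull ℝ D :=
      subset_convexHull ℝ D (Set.mem_union_right _ rfl)
    have h2 := hub _ hve
    rw [map_add] at h2
    have h3 : ℓ e = lam := rfl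
    rw [h3] at h2
    linarith
  set x₀ : Fin n → ℝ := fun j => ℓ ((Pi.single j 1 : Fin n → ℝ), 0) / lam with hx₀
  have key : ∀ q : (Fin n → ℝ) × ℝ, lam * phi x₀ q = ℓ q := by
    intro q
    rw [hx₀, phi_lam ℓ (ne_of_gt hlampos) q]
    ring_nf
    rw [hlam]; ring
  refine ⟨x₀, fun j hj => ?_⟩
  have hja : apex g j ∈ convexHull ℝ D := by
    apply subset_convexHull ℝ D
    left
    refine ⟨⟨j, rfl⟩, fun hEq => ?_⟩
    rw [Set.mem_singleton_iff] at hEq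
    exact hj (apex_injective g (hEq.trans hi₀.symm))
  have h1 : lam * g.mono i₀ x₀ < lam * g.mono j x₀ := by
    rw [← phi_apex g i₀ x₀, ← phi_apex g j x₀, key, key, hi₀]
    have := hub _ hja
    linarith
  exact lt_of_mul_lt_mul_left h1 (le_of_lt hlampos)

end Aux3
section Aux4
open TropPoly

variable {n : ℕ}

lemma continuous_mono (f : TropPoly n) (i : Fin f.k) : Continuous (f.mono i) := by
  unfold TropPoly.mono
  exact (continuous_finset_sum _ fun j _ => continuous_const.mul (continuous_apply j)).add
    continuous_const

lemma isLinearMap_comb (cvec : Fin n → ℝ) :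
    IsLinearMap ℝ (fun x : Fin n → ℝ => ∑ m, cvec m * x m) := by
  constructor
  · intro x y
    simp only [Pi.add_apply, mul_add]
    exact Finset.sum_add_distrib
  · intro c x
    simp only [Pi.smul_apply, smul_eq_mul, Finset.mul_sum]
    exact Finset.sum_congr rfl fun m _ => by ring

/-- the open cell of strict minimality of monomial `i` -/
def cell (f : TropPoly n) (i : Fin f.k) : Set (Fin n → ℝ) :=
  {x | ∀ j, j ≠ i → f.mono i x < f.mono j x}

lemma isOpen_cell (f : TropPoly n) (i : Fin f.k) : IsOpen (cell f i) := by
  have : cell f i = ⋂ j, {x | j ≠ i → f.mono i x < f.mono j x} := by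
    ext x; simp [cell]
  rw [this]
  refine isOpen_iInter_of_finite fun j => ?_
  by_cases hj : j = i
  · have : {x : Fin n → ℝ | j ≠ i → f.mono i x < f.mono j x} = Set.univ := by
      ext x; simp [hj]
    rw [this]; exact isOpen_univ
  · have : {x : Fin n → ℝ | j ≠ i → f.mono i x < f.mono j x}
        = {x | f.mono i x < f.mono j x} := by
      ext x; simp [hj]
    rw [this]
    exact isOpen_lt (continuous_mono f i) (continuous_mono f j)

lemma convex_cell (f : TropPoly n) (i : Fin f.k) : Convex ℝ (cell f i) := by
  have : cell f i = ⋂ j, {x | j ≠ i → f.mono i x < f.mono j x} := by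
    ext x; simp [cell]
  rw [this]
  refine convex_iInter fun j => ?_
  by_cases hj : j = i
  · have : {x : Fin n → ℝ | j ≠ i → f.mono i x < f.mono j x} = Set.univ := by
      ext x; simp [hj]
    rw [this]; exact convex_univ
  · have heq : {x : Fin n → ℝ | j ≠ i → f.mono i x < f.mono j x}
        = {x | (fun x => ∑ m, ((f.a i m : ℝ) - (f.a j m : ℝ)) * x m) x < f.c j - f.c i} := by
      ext x
      simp only [Set.mem_setOf_eq, hj, ne_eq, not_false_eq_true, forall_true_left,
        TropPoly.mono]
      rw [show (∑ m, ((f.a i m : ℝ) - (f.a j m : ℝ)) * x m)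
          = (∑ m, (f.a i m : ℝ) * x m) - ∑ m, (f.a j m : ℝ) * x m by
        rw [← Finset.sum_sub_distrib]
        exact Finset.sum_congr rfl fun m _ => by ring]
      constructor <;> intro <;> linarith
    rw [heq]
    exact convex_halfSpace_lt (isLinearMap_comb _) _

lemma cell_disjoint (f : TropPoly n) {i j : Fin f.k} (hij : i ≠ j) :
    cell f i ∩ cell f j = ∅ := by
  ext x
  simp only [Set.mem_inter_iff, Set.mem_empty_iff_false, iff_false, not_and]
  intro hi hj
  have h1 := hi j (Ne.symm hij)
  have h2 := hj i hij
  linarith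

lemma mem_cell_of_not_trop (f : TropPoly n) {x} (hx : x ∉ f.tropSet) :
    ∃ i, x ∈ cell f i := by
  obtain ⟨i, hi⟩ := exists_eval_eq f x
  refine ⟨i, fun j hj => ?_⟩
  rcases lt_or_eq_of_le (eval_le f j x) with h | h
  · rw [← hi] at h; exact h
  · exact absurd ⟨j, i, hj, h.symm, hi⟩ hx

/-- on the cell of `g` dual to a vertex, `f` has a single minimizing monomial -/
lemma exists_min_index (f g : TropPoly n) (hsub : f.tropSet ⊆ g.tropSet)
    (i₀ : Fin g.k) (x₀ : Fin n → ℝ) (hx₀ : x₀ ∈ cell g i₀) :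
    ∃ i₁ : Fin f.k, cell g i₀ ⊆ cell f i₁ := by
  have hdisj : ∀ x ∈ cell g i₀, x ∉ f.tropSet := by
    intro x hx hxf
    obtain ⟨i, j, hij, hi, hj⟩ := hsub hxf
    rcases ne_or_eq i i₀ with h | h
    · have h1 := hx i h
      have h2 := eval_le g i₀ x
      rw [hi] at h1
      linarith
    · have hji : j ≠ i₀ := by rw [← h]; exact Ne.symm hij
      have h1 := hx j hji
      have h2 := eval_le g i₀ x
      rw [hj] at h1
      linarith
  obtain ⟨i₁, hi₁⟩ := mem_cell_of_not_trop f (hdisj x₀ hx₀)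
  refine ⟨i₁, fun x₁ hx₁ => ?_⟩
  by_contra hx₁f
  obtain ⟨i₂, hi₂⟩ := mem_cell_of_not_trop f (hdisj x₁ hx₁)
  have hne : i₂ ≠ i₁ := fun hEq => hx₁f (hEq ▸ hi₂)
  have hconn := (convex_cell g i₀).isPreconnected
  have hcov : cell g i₀ ⊆ cell f i₁ ∪ ⋃ (j : Fin f.k) (_ : j ≠ i₁), cell f j := by
    intro x hx
    obtain ⟨i, hi⟩ := mem_cell_of_not_trop f (hdisj x hx)
    rcases eq_or_ne i i₁ with h | h
    · exact Or.inl (h ▸ hi)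
    · exact Or.inr (Set.mem_biUnion h hi)
  have hres := hconn (cell f i₁) (⋃ (j : Fin f.k) (_ : j ≠ i₁), cell f j)
    (isOpen_cell f i₁) (isOpen_iUnion fun j => isOpen_iUnion fun _ => isOpen_cell f j)
    hcov ⟨x₀, hx₀, hi₁⟩ ⟨x₁, hx₁, Set.mem_biUnion hne hi₂⟩
  obtain ⟨y, -, hy1, hy2⟩ := hres
  obtain ⟨j, hj, hyj⟩ := by
    simpa using hy2
  have := cell_disjoint f (Ne.symm hj : i₁ ≠ j)
  rw [Set.eq_empty_iff_forall_notMem] at this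
  exact this y ⟨hy1, hyj⟩

lemma mono_combo (f : TropPoly n) (i : Fin f.k) (x y : Fin n → ℝ) (s t : ℝ)
    (hst : s + t = 1) :
    f.mono i (s • x + t • y) = s * f.mono i x + t * f.mono i y := by
  unfold TropPoly.mono
  have h : ∀ m ∈ Finset.univ, (f.a i m : ℝ) * (s • x + t • y) m
      = s * ((f.a i m : ℝ) * x m) + t * ((f.a i m : ℝ) * y m) := fun m _ => by
    simp only [Pi.add_apply, Pi.smul_apply, smul_eq_mul]
    ring
  rw [Finset.sum_congr rfl h, Finset.sum_add_distrib, ← Finset.mul_sum, ← Finset.mul_sum]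
  linear_combination (-f.c i) * hst

lemma le_of_forall_combo {A A' B B' : ℝ}
    (h : ∀ τ : ℝ, 0 < τ → τ ≤ 1 → (1-τ)*A + τ*B ≤ (1-τ)*A' + τ*B') : A ≤ A' := by
  by_contra hlt
  push_neg at hlt
  set δ := A - A' with hδdef
  set C := B' - B with hCdef
  have hδ : 0 < δ := by simp only [hδdef]; linarith
  have habs : (0:ℝ) ≤ |C| := abs_nonneg C
  have hden : (0:ℝ) < 2 * (|C| + δ) := by linarith
  set τ := min 1 (δ / (2 * (|C| + δ))) with hτdef
  have hpos : 0 < τ := lt_min one_pos (div_pos hδ hden)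
  have hle1 : τ ≤ 1 := min_le_left _ _
  have h1 := h τ hpos hle1
  have h2 : δ ≤ τ * (C + δ) := by nlinarith
  have h3 : τ * (C + δ) ≤ τ * (|C| + δ) := by
    have := le_abs_self C
    nlinarith
  have h4 : τ ≤ δ / (2*(|C|+δ)) := min_le_right _ _
  have h5 : τ * (|C| + δ) ≤ δ / 2 := by
    rw [le_div_iff₀ hden] at h4
    nlinarith
  have h6 : δ ≤ δ / 2 := le_trans h2 (le_trans h3 h5)
  linarith

/-- extension of the strict cell inclusion to the closed cell -/
lemma min_on_closed_cell (f g : TropPoly n) {i₀ : Fin g.k} {i₁ : Fin f.k}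
    (x₀ : Fin n → ℝ) (hx₀ : x₀ ∈ cell g i₀) (hsub : cell g i₀ ⊆ cell f i₁) :
    ∀ x, (∀ j, g.mono i₀ x ≤ g.mono j x) → ∀ j', f.mono i₁ x ≤ f.mono j' x := by
  intro x hx j'
  refine le_of_forall_combo (A := f.mono i₁ x) (A' := f.mono j' x)
    (B := f.mono i₁ x₀) (B' := f.mono j' x₀) fun τ hτ hτ1 => ?_
  have hmem : (1-τ) • x + τ • x₀ ∈ cell g i₀ := by
    intro j hj
    rw [mono_combo g i₀ x x₀ (1-τ) τ (by ring), mono_combo g j x x₀ (1-τ) τ (by ring)]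
    have h1 := hx j
    have h2 := hx₀ j hj
    nlinarith
  by_cases hj' : j' = i₁
  · rw [hj']
  · have := (hsub hmem) j' hj'
    rw [mono_combo f i₁ x x₀ (1-τ) τ (by ring),
      mono_combo f j' x x₀ (1-τ) τ (by ring)] at this
    linarith

end Aux4
section Farkas
open TropPoly

variable {n : ℕ}

/-- explicit pairing on `ℝⁿ × ℝ` -/
def dotp (y p : (Fin n → ℝ) × ℝ) : ℝ := (∑ j, y.1 j * p.1 j) + y.2 * p.2

lemma dotp_add_left (y y' p : (Fin n → ℝ) × ℝ) :
    dotp (y + y') p = dotp y p + dotp y' p := by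
  unfold dotp
  simp only [Prod.fst_add, Prod.snd_add, Pi.add_apply, add_mul]
  rw [Finset.sum_add_distrib]
  ring

lemma dotp_smul_left (c : ℝ) (y p : (Fin n → ℝ) × ℝ) :
    dotp (c • y) p = c * dotp y p := by
  unfold dotp
  have h : ∀ j ∈ Finset.univ, (c • y).1 j * p.1 j = c * (y.1 j * p.1 j) := fun j _ => by
    simp only [Prod.smul_fst, Pi.smul_apply, smul_eq_mul]; ring
  rw [Finset.sum_congr rfl h, ← Finset.mul_sum]
  simp only [Prod.smul_snd, smul_eq_mul]
  ring

lemma dotp_sub_left (y y' p : (Fin n → ℝ) × ℝ) :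
    dotp (y - y') p = dotp y p - dotp y' p := by
  have h := dotp_add_left (y - y') y' p
  rw [sub_add_cancel] at h
  linarith

lemma dotp_sum_left {m : ℕ} (w : Fin m → (Fin n → ℝ) × ℝ) (t : Fin m → ℝ)
    (p : (Fin n → ℝ) × ℝ) :
    dotp (∑ i, t i • w i) p = ∑ i, t i * dotp (w i) p := by
  induction m with
  | zero => simp [dotp]
  | succ m ih =>
    rw [Fin.sum_univ_castSucc, Fin.sum_univ_castSucc (f := fun i => t i * dotp (w i) p),
      dotp_add_left, dotp_smul_left, ih (fun i => w i.castSucc) (fun i => t i.castSucc)]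

lemma dotp_add_right (y p q : (Fin n → ℝ) × ℝ) :
    dotp y (p + q) = dotp y p + dotp y q := by
  unfold dotp
  simp only [Prod.fst_add, Prod.snd_add, Pi.add_apply, mul_add]
  rw [Finset.sum_add_distrib]
  ring

lemma dotp_smul_right (c : ℝ) (y p : (Fin n → ℝ) × ℝ) :
    dotp y (c • p) = c * dotp y p := by
  unfold dotp
  have h : ∀ j ∈ Finset.univ, y.1 j * (c • p).1 j = c * (y.1 j * p.1 j) := fun j _ => by
    simp only [Prod.smul_fst, Pi.smul_apply, smul_eq_mul]; ring
  rw [Finset.sum_congr rfl h, ← Finset.mul_sum]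
  simp only [Prod.smul_snd, smul_eq_mul]
  ring

lemma phi_eq_dotp (x : Fin n → ℝ) (p : (Fin n → ℝ) × ℝ) :
    phi x p = dotp p (x, 1) := by
  unfold phi dotp
  simp only [mul_one]
  congr 1
  exact Finset.sum_congr rfl fun j _ => mul_comm _ _

lemma clm_repr (ℓ : ((Fin n → ℝ) × ℝ) →L[ℝ] ℝ) (p : (Fin n → ℝ) × ℝ) :
    ℓ p = dotp p ((fun j => ℓ ((Pi.single j 1 : Fin n → ℝ), 0)), ℓ ((0 : Fin n → ℝ), 1)) := by
  rw [clm_decomp ℓ p]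
  rfl

/-- the cone generated by a finite family -/
def coneIx {m : ℕ} (w : Fin m → (Fin n → ℝ) × ℝ) : Set ((Fin n → ℝ) × ℝ) :=
  {y | ∃ t : Fin m → ℝ, (∀ i, 0 ≤ t i) ∧ y = ∑ i, t i • w i}

lemma convex_coneIx {m : ℕ} (w : Fin m → (Fin n → ℝ) × ℝ) : Convex ℝ (coneIx w) := by
  rintro y ⟨t, ht, rfl⟩ y' ⟨t', ht', rfl⟩ a b ha hb _
  refine ⟨fun i => a * t i + b * t' i, fun i => add_nonneg (mul_nonneg ha (ht i)) (mul_nonneg hb (ht' i)), ?_⟩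
  rw [Finset.smul_sum, Finset.smul_sum, ← Finset.sum_add_distrib]
  refine Finset.sum_congr rfl fun i _ => ?_
  rw [add_smul, smul_smul, smul_smul]

lemma zero_mem_coneIx {m : ℕ} (w : Fin m → (Fin n → ℝ) × ℝ) : 0 ∈ coneIx w :=
  ⟨0, fun i => le_refl 0, by simp⟩

lemma smul_mem_coneIx {m : ℕ} (w : Fin m → (Fin n → ℝ) × ℝ) {c : ℝ} (hc : 0 ≤ c)
    {y} (hy : y ∈ coneIx w) : c • y ∈ coneIx w := by
  obtain ⟨t, ht, rfl⟩ := hy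
  refine ⟨fun i => c * t i, fun i => mul_nonneg hc (ht i), ?_⟩
  rw [Finset.smul_sum]
  exact Finset.sum_congr rfl fun i _ => (smul_smul c (t i) (w i))

lemma gen_mem_coneIx {m : ℕ} (w : Fin m → (Fin n → ℝ) × ℝ) (i : Fin m) :
    w i ∈ coneIx w := by
  refine ⟨fun j => if j = i then 1 else 0, fun j => by by_cases h : j = i <;> simp [h], ?_⟩
  rw [Finset.sum_congr rfl (fun j _ => by
    split_ifs with h
    · rw [h, one_smul]
    · rw [zero_smul] :
    ∀ j ∈ Finset.univ, (if j = i then (1:ℝ) else 0) • w j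
      = if j = i then w i else 0)]
  simp

/-- Carathéodory for cones -/
lemma cone_caratheodory {m : ℕ} (w : Fin m → (Fin n → ℝ) × ℝ) :
    ∀ (N : ℕ) (s : Finset (Fin m)) (t : Fin m → ℝ), s.card ≤ N →
      (∀ i, 0 ≤ t i) → (∀ i ∉ s, t i = 0) →
      ∃ s' : Finset (Fin m), s' ⊆ s ∧
        (LinearIndependent ℝ (fun i : s' => w i)) ∧
        ∃ t' : Fin m → ℝ, (∀ i, 0 ≤ t' i) ∧ (∀ i ∉ s', t' i = 0) ∧
          ∑ i, t' i • w i = ∑ i, t i • w i := by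
  intro N
  induction N with
  | zero =>
    intro s t hcard ht hts
    have hs : s = ∅ := Finset.card_eq_zero.1 (Nat.le_zero.1 hcard)
    haveI : IsEmpty {x // x ∈ s} := by
      rw [hs]
      exact ⟨fun x => (Finset.notMem_empty _ x.2)⟩
    exact ⟨s, subset_refl s, linearIndependent_empty_type, t, ht, hts, rfl⟩
  | succ N ih =>
    intro s t hcard ht hts
    by_cases hli : LinearIndependent ℝ (fun i : s => w i)
    · exact ⟨s, subset_refl s, hli, t, ht, hts, rfl⟩
    · -- extract a dependence relation with a positive coefficient on s
      obtain ⟨gc, hgsum, i₂, hgne⟩ := Fintype.not_linearIndependent_iff.1 hli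
      have key : ∃ r : Fin m → ℝ, (∀ i ∉ s, r i = 0) ∧ (∑ i, r i • w i = 0)
          ∧ ∃ i ∈ s, 0 < r i := by
        by_cases hpos : ∃ i₃ : s, 0 < gc i₃
        · refine ⟨fun i => if h : i ∈ s then gc ⟨i, h⟩ else 0,
            fun i hi => dif_neg hi, ?_, ?_⟩
          · rw [← Finset.sum_subset (Finset.subset_univ s)
              (fun i _ hi => by simp only [dif_neg hi, zero_smul])]
            rw [← Finset.sum_attach s (fun i => (if h : i ∈ s then gc ⟨i, h⟩ else 0) • w i)]
            have hcg : ∀ i ∈ s.attach, (if h : (i : Fin m) ∈ s then gc ⟨i, h⟩ else 0) • w i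
                = gc i • w i := fun i _ => by simp only [dif_pos i.2, Subtype.coe_eta]
            rw [Finset.sum_congr rfl hcg, ← Finset.univ_eq_attach, hgsum]
          · obtain ⟨i₃, hi₃⟩ := hpos
            refine ⟨i₃, i₃.2, ?_⟩
            simpa only [dif_pos i₃.2, Subtype.coe_eta] using hi₃
        · push_neg at hpos
          refine ⟨fun i => if h : i ∈ s then -gc ⟨i, h⟩ else 0,
            fun i hi => dif_neg hi, ?_, ?_⟩
          · rw [← Finset.sum_subset (Finset.subset_univ s)
              (fun i _ hi => by simp only [dif_neg hi, zero_smul])]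
            rw [← Finset.sum_attach s (fun i => (if h : i ∈ s then -gc ⟨i, h⟩ else 0) • w i)]
            have hcg : ∀ i ∈ s.attach, (if h : (i : Fin m) ∈ s then -gc ⟨i, h⟩ else 0) • w i
                = -(gc i • w i) := fun i _ => by
              simp only [dif_pos i.2, Subtype.coe_eta, neg_smul]
            rw [Finset.sum_congr rfl hcg, Finset.sum_neg_distrib, ← Finset.univ_eq_attach,
              hgsum, neg_zero]
          · refine ⟨i₂, i₂.2, ?_⟩
            simp only [dif_pos i₂.2, Subtype.coe_eta]
            rcases lt_trichotomy (gc i₂) 0 with h | h | h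
            · simpa using h
            · exact absurd h hgne
            · exact absurd h (not_lt.2 (hpos i₂))
      obtain ⟨r, hrs, hrsum, iw, hiws, hiwpos⟩ := key
      set P := s.filter (fun i => 0 < r i) with hP
      have hPne : P.Nonempty := ⟨iw, Finset.mem_filter.2 ⟨hiws, hiwpos⟩⟩
      obtain ⟨istar, histar, hstar⟩ := Finset.exists_mem_eq_inf' hPne (fun i => t i / r i)
      set τ := P.inf' hPne (fun i => t i / r i) with hτ
      have hτ0 : 0 ≤ τ := by
        rw [hτ, Finset.le_inf'_iff]
        intro i hi
        have := (Finset.mem_filter.1 hi).2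
        exact div_nonneg (ht i) (le_of_lt this)
      set t' : Fin m → ℝ := fun i => t i - τ * r i with ht'
      have ht'pos : ∀ i, 0 ≤ t' i := by
        intro i
        show 0 ≤ t i - τ * r i
        by_cases hri : 0 < r i
        · have his : i ∈ s := by
            by_contra habs
            rw [hrs i habs] at hri
            exact lt_irrefl 0 hri
          have hτle : τ ≤ t i / r i := Finset.inf'_le _ (Finset.mem_filter.2 ⟨his, hri⟩)
          rw [le_div_iff₀ hri] at hτle
          linarith
        · push_neg at hri
          have h1 : τ * r i ≤ 0 := mul_nonpos_of_nonneg_of_nonpos hτ0 hri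
          have h2 := ht i
          linarith
      have hstar0 : t' istar = 0 := by
        have hrpos := (Finset.mem_filter.1 histar).2
        show t istar - τ * r istar = 0
        rw [hstar, div_mul_cancel₀ _ (ne_of_gt hrpos), sub_self]
      have ht's : ∀ i ∉ s.erase istar, t' i = 0 := by
        intro i hi
        rw [Finset.mem_erase] at hi
        push_neg at hi
        by_cases his : i ∈ s
        · have heq : i = istar := by
            by_contra hne
            exact (hi hne) his
          rw [heq]
          exact hstar0
        · show t i - τ * r i = 0
          rw [hts i his, hrs i his]
          ring
      have hsum : ∑ i, t' i • w i = ∑ i, t i • w i := by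
        show ∑ i, (t i - τ * r i) • w i = ∑ i, t i • w i
        have : ∀ i ∈ Finset.univ, (t i - τ * r i) • w i = t i • w i - τ • (r i • w i) :=
          fun i _ => by rw [sub_smul, smul_smul]
        rw [Finset.sum_congr rfl this, Finset.sum_sub_distrib, ← Finset.smul_sum, hrsum,
          smul_zero, sub_zero]
      have hcard' : (s.erase istar).card ≤ N := by
        have h1 : istar ∈ s := (Finset.mem_filter.1 histar).1
        have := Finset.card_erase_of_mem h1
        omega
      obtain ⟨s', hs'sub, hs'li, t'', ht''⟩ := ih (s.erase istar) t' hcard' ht'pos ht's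
      exact ⟨s', hs'sub.trans (Finset.erase_subset _ _), hs'li, t'',
        ht''.1, ht''.2.1, ht''.2.2.trans hsum⟩

end Farkas
section Farkas2
open TropPoly

variable {n : ℕ}

def combMap {m : ℕ} (w : Fin m → (Fin n → ℝ) × ℝ) (s : Finset (Fin m)) :
    ({x // x ∈ s} → ℝ) →ₗ[ℝ] (Fin n → ℝ) × ℝ where
  toFun h := ∑ i : {x // x ∈ s}, h i • w i
  map_add' h h' := by
    rw [← Finset.sum_add_distrib]
    exact Finset.sum_congr rfl fun i _ => by rw [Pi.add_apply, add_smul]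
  map_smul' c h := by
    rw [RingHom.id_apply, Finset.smul_sum]
    exact Finset.sum_congr rfl fun i _ => by rw [Pi.smul_apply, smul_smul, smul_eq_mul]

def Kset {m : ℕ} (w : Fin m → (Fin n → ℝ) × ℝ) (s : Finset (Fin m)) :
    Set ((Fin n → ℝ) × ℝ) :=
  {y | ∃ t : Fin m → ℝ, (∀ i, 0 ≤ t i) ∧ (∀ i ∉ s, t i = 0) ∧ y = ∑ i, t i • w i}

lemma Kset_eq {m : ℕ} (w : Fin m → (Fin n → ℝ) × ℝ) (s : Finset (Fin m)) :
    Kset w s = combMap w s '' {h | ∀ i, 0 ≤ h i} := by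
  ext y
  constructor
  · rintro ⟨t, ht, hts, rfl⟩
    refine ⟨fun i => t i, fun i => ht i, ?_⟩
    show ∑ i : {x // x ∈ s}, t ↑i • w ↑i = ∑ i, t i • w i
    have h1 : ∑ i : {x // x ∈ s}, t ↑i • w ↑i = ∑ i ∈ s, t i • w i := by
      rw [Finset.univ_eq_attach]
      exact Finset.sum_attach s (fun i => t i • w i)
    rw [h1]
    exact Finset.sum_subset (Finset.subset_univ s)
      (fun i _ hi => by rw [hts i hi, zero_smul])
  · rintro ⟨h, hpos, rfl⟩
    refine ⟨fun i => if hi : i ∈ s then h ⟨i, hi⟩ else 0,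
      fun i => by
        by_cases hi : i ∈ s
        · simp only [dif_pos hi]
          exact hpos _
        · simp only [dif_neg hi]
          exact le_refl 0,
      fun i hi => dif_neg hi, ?_⟩
    show combMap w s h = _
    have h1 : ∑ i, (if hi : i ∈ s then h ⟨i, hi⟩ else 0) • w i
        = ∑ i ∈ s, (if hi : i ∈ s then h ⟨i, hi⟩ else 0) • w i :=
      (Finset.sum_subset (Finset.subset_univ s)
        (fun i _ hi => by simp only [dif_neg hi, zero_smul])).symm
    rw [h1, ← Finset.sum_attach s (fun i => (if hi : i ∈ s then h ⟨i, hi⟩ else 0) • w i)]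
    show combMap w s h = ∑ i ∈ s.attach, _
    rw [show (combMap w s h : (Fin n → ℝ) × ℝ) = ∑ i : {x // x ∈ s}, h i • w i from rfl,
      Finset.univ_eq_attach]
    exact Finset.sum_congr rfl fun i _ => by simp only [dif_pos i.2, Subtype.coe_eta]

lemma isClosed_Kset {m : ℕ} (w : Fin m → (Fin n → ℝ) × ℝ) (s : Finset (Fin m))
    (hli : LinearIndependent ℝ (fun i : {x // x ∈ s} => w i)) : IsClosed (Kset w s) := by
  rw [Kset_eq]
  have hker : LinearMap.ker (combMap w s) = ⊥ := by
    rw [LinearMap.ker_eq_bot']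
    intro h hh
    have hh' : ∑ i, h i • w (↑i) = 0 := hh
    funext i
    exact Fintype.linearIndependent_iff.1 hli h hh' i
  have hemb := LinearMap.isClosedEmbedding_of_injective (𝕜 := ℝ) hker
  refine hemb.isClosedMap _ ?_
  have horth : {h : {x // x ∈ s} → ℝ | ∀ i, 0 ≤ h i} = ⋂ i, {h | 0 ≤ h i} := by
    ext h; simp
  rw [horth]
  exact isClosed_iInter fun i => isClosed_le continuous_const (continuous_apply i)

lemma isClosed_coneIx {m : ℕ} (w : Fin m → (Fin n → ℝ) × ℝ) : IsClosed (coneIx w) := by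
  have hcone : coneIx w = ⋃ s ∈ {s : Finset (Fin m) |
      LinearIndependent ℝ (fun i : {x // x ∈ s} => w i)}, Kset w s := by
    ext y
    simp only [Set.mem_iUnion]
    constructor
    · rintro ⟨t, ht, rfl⟩
      obtain ⟨s', _, hli, t', h1, h2, h3⟩ := cone_caratheodory w m Finset.univ t
        (le_of_eq (by simp)) ht (fun i hi => absurd (Finset.mem_univ i) hi)
      exact ⟨s', hli, t', h1, h2, h3.symm⟩
    · rintro ⟨s, hli, t, h1, h2, h3⟩
      exact ⟨t, h1, h3⟩
  rw [hcone]
  exact Set.Finite.isClosed_biUnion (Set.toFinite _) (fun s hs => isClosed_Kset w s hs)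

/-- Farkas' lemma -/
lemma farkas {m : ℕ} (w : Fin m → (Fin n → ℝ) × ℝ) (z : (Fin n → ℝ) × ℝ)
    (hz : ∀ y : (Fin n → ℝ) × ℝ, (∀ i, 0 ≤ dotp (w i) y) → 0 ≤ dotp z y) :
    z ∈ coneIx w := by
  by_contra hzK
  obtain ⟨ℓ, u, h1, h2⟩ :=
    geometric_hahn_banach_point_closed (convex_coneIx w) (isClosed_coneIx w) hzK
  have hu0 : u < 0 := by simpa using h2 0 (zero_mem_coneIx w)
  have hnonneg : ∀ y ∈ coneIx w, 0 ≤ ℓ y := by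
    intro y hy
    by_contra hneg
    push_neg at hneg
    have hc : 0 ≤ (u - 1) / ℓ y :=
      div_nonneg_of_nonpos (by linarith) (le_of_lt hneg)
    have h3 := h2 _ (smul_mem_coneIx w hc hy)
    rw [map_smul, smul_eq_mul, div_mul_cancel₀ _ (ne_of_lt hneg)] at h3
    linarith
  set y₀ := ((fun j => ℓ ((Pi.single j 1 : Fin n → ℝ), 0)), ℓ ((0 : Fin n → ℝ), 1)) with hy₀
  have hrep : ∀ q, ℓ q = dotp q y₀ := fun q => clm_repr ℓ q
  have hwy : ∀ i, 0 ≤ dotp (w i) y₀ := fun i => by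
    rw [← hrep]; exact hnonneg _ (gen_mem_coneIx w i)
  have h4 := hz y₀ hwy
  rw [← hrep] at h4
  linarith

end Farkas2
section Aux5
open TropPoly

variable {n : ℕ}

lemma bound (g : TropPoly n) (i₀ : Fin g.k) (x₀ : Fin n → ℝ) (hx₀ : x₀ ∈ cell g i₀)
    (h : (Fin n → ℝ) × ℝ)
    (hh : ∀ x, (∀ j, g.mono i₀ x ≤ g.mono j x) → 0 ≤ phi x h) :
    ∃ M : ℝ, 0 ≤ M ∧ ∀ x, -(phi x h) ≤ M * (g.mono i₀ x - g.eval x) := by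
  set w : Fin (g.k + 1) → (Fin n → ℝ) × ℝ :=
    Fin.snoc (fun k => apex g k - apex g i₀) ((0 : Fin n → ℝ), 1) with hw
  have hwx : ∀ (k : Fin g.k) (x : Fin n → ℝ),
      dotp (w k.castSucc) (x, 1) = g.mono k x - g.mono i₀ x := by
    intro k x
    rw [hw]
    simp only [Fin.snoc_castSucc]
    rw [dotp_sub_left, ← phi_eq_dotp, ← phi_eq_dotp, phi_apex, phi_apex]
  have hlast : ∀ (x : Fin n → ℝ), dotp (w (Fin.last g.k)) (x, 1) = 1 := by
    intro x
    rw [hw]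
    simp only [Fin.snoc_last]
    unfold dotp
    simp
  have hsplit : ∀ (q : (Fin n → ℝ) × ℝ) (x₁ d : Fin n → ℝ) (s : ℝ),
      dotp q (x₁ + s • d, 1) = dotp q (x₁, 1) + s * dotp q (d, 0) := by
    intro q x₁ d s
    have : ((x₁ + s • d, (1:ℝ)) : (Fin n → ℝ) × ℝ) = (x₁, 1) + s • (d, 0) := by
      ext <;> simp
    rw [this, dotp_add_right, dotp_smul_right]
  have hmem : h ∈ coneIx w := by
    apply farkas
    intro y hy
    rcases lt_trichotomy y.2 0 with hr | hr | hr
    · exfalso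
      have h1 := hy (Fin.last g.k)
      rw [hw] at h1
      simp only [Fin.snoc_last] at h1
      unfold dotp at h1
      simp at h1
      linarith
    · -- y.2 = 0 : recession direction
      have hyrep : ((y.1, (0:ℝ)) : (Fin n → ℝ) × ℝ) = y := Prod.ext rfl hr.symm
      by_contra hneg
      push_neg at hneg
      set δ := -(dotp h y) with hδ
      have hδpos : 0 < δ := by rw [hδ]; linarith
      set s := (|dotp h (x₀, 1)| + 1) / δ with hs
      have hs0 : 0 ≤ s := div_nonneg (by positivity) (le_of_lt hδpos)
      set z := x₀ + s • y.1 with hz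
      have hxs : ∀ j, g.mono i₀ z ≤ g.mono j z := by
        intro j
        have h1 : 0 ≤ dotp (w j.castSucc) (z, 1) := by
          rw [hz, hsplit, hyrep, hwx]
          have h2 : 0 ≤ g.mono j x₀ - g.mono i₀ x₀ := by
            rcases eq_or_ne j i₀ with hj | hj
            · rw [hj]; linarith
            · have := hx₀ j hj; linarith
          have h3 := hy j.castSucc
          nlinarith
        rw [hwx] at h1
        linarith
      have h4 := hh z hxs
      rw [phi_eq_dotp, hz, hsplit, hyrep] at h4
      have hyδ : dotp h y = -δ := by rw [hδ]; ring
      have hδne : δ ≠ 0 := ne_of_gt hδpos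
      have h5 : s * dotp h y = -(|dotp h (x₀, 1)| + 1) := by
        rw [hyδ, hs]
        field_simp
      rw [h5] at h4
      have h6 := le_abs_self (dotp h (x₀, 1))
      linarith
    · -- y.2 > 0
      have hyrep : ((y.2⁻¹ • y.1, (1:ℝ)) : (Fin n → ℝ) × ℝ) = y.2⁻¹ • y :=
        Prod.ext rfl (by simp [inv_mul_cancel₀ (ne_of_gt hr)])
      set x := y.2⁻¹ • y.1 with hx
      have hdq : ∀ q : (Fin n → ℝ) × ℝ, dotp q (x, 1) = y.2⁻¹ * dotp q y := by
        intro q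
        rw [hx, hyrep, dotp_smul_right]
      have hxs : ∀ j, g.mono i₀ x ≤ g.mono j x := by
        intro j
        have h1 : 0 ≤ dotp (w j.castSucc) (x, 1) := by
          rw [hdq]
          exact mul_nonneg (le_of_lt (inv_pos.2 hr)) (hy j.castSucc)
        rw [hwx] at h1
        linarith
      have h4 := hh x hxs
      rw [phi_eq_dotp, hdq] at h4
      by_contra hneg
      push_neg at hneg
      have : y.2⁻¹ * dotp h y < 0 := mul_neg_of_pos_of_neg (inv_pos.2 hr) hneg
      linarith
  obtain ⟨t, ht, hrep⟩ := hmem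
  set M := ∑ k : Fin g.k, t k.castSucc with hM
  refine ⟨M, Finset.sum_nonneg (fun k _ => ht _), fun x => ?_⟩
  have h1 : phi x h = (∑ k : Fin g.k, t k.castSucc * (g.mono k x - g.mono i₀ x))
      + t (Fin.last g.k) := by
    rw [phi_eq_dotp, hrep, dotp_sum_left, Fin.sum_univ_castSucc]
    congr 1
    · exact Finset.sum_congr rfl fun k _ => by rw [hwx]
    · rw [hlast x, mul_one]
  have h3 : ∑ k : Fin g.k, t k.castSucc * (g.mono i₀ x - g.mono k x)
      ≤ M * (g.mono i₀ x - g.eval x) := by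
    rw [hM, Finset.sum_mul]
    refine Finset.sum_le_sum fun k _ => ?_
    have := eval_le g k x
    exact mul_le_mul_of_nonneg_left (by linarith) (ht _)
  have h4 : -(phi x h) = (∑ k : Fin g.k, t k.castSucc * (g.mono i₀ x - g.mono k x))
      - t (Fin.last g.k) := by
    rw [h1, neg_add, ← Finset.sum_neg_distrib]
    congr 1
    exact Finset.sum_congr rfl fun k _ => by ring
  have h5 := ht (Fin.last g.k)
  linarith

lemma eval_eq_of_cell (g : TropPoly n) {i₀ : Fin g.k} {x} (hx : x ∈ cell g i₀) :
    g.eval x = g.mono i₀ x := by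
  obtain ⟨i, hi⟩ := exists_eval_eq g x
  rcases eq_or_ne i i₀ with h | h
  · rw [← hi, h]
  · exfalso
    have h1 := hx i h
    have h2 := eval_le g i₀ x
    rw [hi] at h1
    linarith

lemma strict_min_unique (g : TropPoly n) {i₀ : Fin g.k} {x} (hx : x ∈ cell g i₀) :
    ∀ p ∈ g.newton, phi x p = g.mono i₀ x → p = apex g i₀ := by
  set W := {p : (Fin n → ℝ) × ℝ | p = apex g i₀ ∨ g.mono i₀ x < phi x p} with hW
  have hsubW : g.newton ⊆ W := by
    refine convexHull_min (fun q hq => ?_) (fun p hp q hq a b ha hb hab => ?_)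
    · obtain ⟨i, s, hs, rfl⟩ := (mem_gen_iff g q).1 hq
      have hps : phi x ((0 : Fin n → ℝ), s) = s := by simp [phi]
      rcases eq_or_ne i i₀ with h | h
      · subst h
        rcases eq_or_lt_of_le hs with h0 | h0
        · left
          rw [← h0]
          simp
        · right
          rw [phi_add, phi_apex, hps]
          linarith
      · right
        rw [phi_add, phi_apex, hps]
        have h1 := hx i h
        linarith
    · rcases eq_or_lt_of_le ha with ha0 | ha0
      · rw [← ha0, zero_smul, zero_add]
        have hb1 : b = 1 := by linarith
        rw [hb1, one_smul]
        exact hq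
      rcases eq_or_lt_of_le hb with hb0 | hb0
      · rw [← hb0, zero_smul, add_zero]
        have ha1 : a = 1 := by linarith
        rw [ha1, one_smul]
        exact hp
      have hpv : g.mono i₀ x ≤ phi x p := by
        rcases hp with h | h
        · rw [h, phi_apex]
        · linarith
      have hqv : g.mono i₀ x ≤ phi x q := by
        rcases hq with h | h
        · rw [h, phi_apex]
        · linarith
      have hV : a * g.mono i₀ x + b * g.mono i₀ x = g.mono i₀ x := by
        rw [← add_mul, hab, one_mul]
      rcases hp with h | h
      · rcases hq with h' | h'
        · left
          rw [h, h', ← add_smul, hab, one_smul]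
        · right
          rw [phi_add, phi_smul, phi_smul]
          have hppe : a * phi x p = a * g.mono i₀ x := by rw [h, phi_apex]
          have hbq : b * g.mono i₀ x < b * phi x q := mul_lt_mul_of_pos_left h' hb0
          linarith
      · right
        rw [phi_add, phi_smul, phi_smul]
        have hap : a * g.mono i₀ x < a * phi x p := mul_lt_mul_of_pos_left h ha0
        have hbq : b * g.mono i₀ x ≤ b * phi x q := mul_le_mul_of_nonneg_left hqv hb
        linarith
  intro p hp hphi
  rcases hsubW hp with h | h
  · exact h
  · exfalso
    linarith

lemma cell_extreme (g : TropPoly n) {i₀ : Fin g.k} {x} (hx : x ∈ cell g i₀) :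
    apex g i₀ ∈ Set.extremePoints ℝ g.newton := by
  refine ⟨apex_mem_newton g i₀, fun p hp q hq hseg => ?_⟩
  obtain ⟨a, b, ha, hb, hab, heq⟩ := hseg
  have hev := eval_eq_of_cell g hx
  have hpv : g.mono i₀ x ≤ phi x p := by
    rw [← hev]
    exact eval_le_phi g x hp
  have hqv : g.mono i₀ x ≤ phi x q := by
    rw [← hev]
    exact eval_le_phi g x hq
  have hsum : a * phi x p + b * phi x q = g.mono i₀ x := by
    rw [← phi_smul, ← phi_smul, ← phi_add, heq, phi_apex]
  have hV : a * g.mono i₀ x + b * g.mono i₀ x = g.mono i₀ x := by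
    rw [← add_mul, hab, one_mul]
  have h1 : a * g.mono i₀ x ≤ a * phi x p := mul_le_mul_of_nonneg_left hpv (le_of_lt ha)
  have h2 : b * g.mono i₀ x ≤ b * phi x q := mul_le_mul_of_nonneg_left hqv (le_of_lt hb)
  have h3 : a * phi x p = a * g.mono i₀ x := by linarith
  have h4 : b * phi x q = b * g.mono i₀ x := by linarith
  have hpe : phi x p = g.mono i₀ x := mul_left_cancel₀ (ne_of_gt ha) h3
  have hqe : phi x q = g.mono i₀ x := mul_left_cancel₀ (ne_of_gt hb) h4
  exact strict_min_unique g hx p hp hpe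

end Aux5
section Main
open TropPoly

variable {n : ℕ}

lemma phi_sub (x : Fin n → ℝ) (p q : (Fin n → ℝ) × ℝ) :
    phi x (p - q) = phi x p - phi x q := by
  have h := phi_add x (p - q) q
  rw [sub_add_cancel] at h
  linarith

theorem trop_subset_iff_totally_inscribable' {n : ℕ} (f g : TropPoly n) :
    f.tropSet ⊆ g.tropSet ↔
      ∀ v ∈ Set.extremePoints ℝ g.newton,
        ∃ t : ℝ, 0 < t ∧ ∃ b : (Fin n → ℝ) × ℝ,
          v ∈ (fun y => t • y + b) '' f.newton ∧
            (fun y => t • y + b) '' f.newton ⊆ g.newton := by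
  constructor
  · -- forward direction
    intro hsub v hv
    obtain ⟨i₀, hvapex, x₀, hx₀⟩ := extreme_apex g hv
    have hx₀c : x₀ ∈ cell g i₀ := hx₀
    obtain ⟨i₁, hi₁⟩ := exists_min_index f g hsub i₀ x₀ hx₀c
    have hP := min_on_closed_cell f g x₀ hx₀c hi₁
    have hbnd : ∀ i : Fin f.k, ∃ M : ℝ, 0 ≤ M ∧
        ∀ x, -(phi x (apex f i - apex f i₁)) ≤ M * (g.mono i₀ x - g.eval x) := by
      intro i
      apply bound g i₀ x₀ hx₀c
      intro x hx
      rw [phi_sub, phi_apex, phi_apex]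
      have h1 := hP x hx i
      linarith
    choose M hM0 hMb using hbnd
    set T := 1 + ∑ i, M i with hT
    have hTpos : 0 < T := by
      have : 0 ≤ ∑ i, M i := Finset.sum_nonneg fun i _ => hM0 i
      rw [hT]; linarith
    set t := T⁻¹ with ht
    have htpos : 0 < t := inv_pos.2 hTpos
    have htM : ∀ i, t * M i ≤ 1 := by
      intro i
      have h1 : M i ≤ T := by
        rw [hT]
        have := Finset.single_le_sum (f := M) (fun j _ => hM0 j) (Finset.mem_univ i)
        linarith
      have h2 : T⁻¹ * M i ≤ T⁻¹ * T :=
        mul_le_mul_of_nonneg_left h1 (le_of_lt (inv_pos.2 hTpos))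
      rwa [inv_mul_cancel₀ (ne_of_gt hTpos)] at h2
    set b := v - t • apex f i₁ with hb
    have hmemb : ∀ i : Fin f.k, t • apex f i + b ∈ g.newton := by
      intro i
      rw [mem_newton_iff]
      intro x
      have h1 : phi x (t • apex f i + b)
          = phi x v + t * (phi x (apex f i - apex f i₁)) := by
        rw [hb, phi_add, phi_smul, phi_sub (p := v), phi_smul, phi_sub]
        ring
      rw [h1]
      have h2 := hMb i x
      have h3 : t * -(phi x (apex f i - apex f i₁))
          ≤ t * (M i * (g.mono i₀ x - g.eval x)) :=
        mul_le_mul_of_nonneg_left h2 (le_of_lt htpos)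
      rw [mul_neg] at h3
      have hG : 0 ≤ g.mono i₀ x - g.eval x := by
        have := eval_le g i₀ x
        linarith
      have h4 : t * M i * (g.mono i₀ x - g.eval x) ≤ 1 * (g.mono i₀ x - g.eval x) :=
        mul_le_mul_of_nonneg_right (htM i) hG
      have h5 : phi x v = g.mono i₀ x := by rw [hvapex, phi_apex]
      rw [mul_assoc] at h4
      rw [one_mul] at h4
      linarith
    refine ⟨t, htpos, b, ⟨apex f i₁, apex_mem_newton f i₁, by rw [hb]; module⟩, ?_⟩
    -- the image is contained in N(g)
    set A : ((Fin n → ℝ) × ℝ) →ᵃ[ℝ] ((Fin n → ℝ) × ℝ) :=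
      { toFun := fun y => t • y + b
        linear := t • LinearMap.id
        map_vadd' := fun p w => by
          show t • (w + p) + b = t • w + (t • p + b)
          rw [smul_add, add_assoc] } with hA
    have himg : (fun y => t • y + b) '' f.newton
        = convexHull ℝ ((fun y => t • y + b) '' gen f) := by
      show A '' f.newton = convexHull ℝ (A '' gen f)
      rw [newton_eq_hull]
      exact AffineMap.image_convexHull A (gen f)
    rw [himg]
    refine convexHull_min ?_ (convex_newton g)
    rintro _ ⟨q, hq, rfl⟩
    obtain ⟨i, s, hs, rfl⟩ := (mem_gen_iff f q).1 hq
    have heq : t • (apex f i + ((0 : Fin n → ℝ), s)) + b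
        = (t • apex f i + b) + ((0 : Fin n → ℝ), t * s) := by
      rw [smul_add, show t • ((0 : Fin n → ℝ), s) = ((0 : Fin n → ℝ), t * s) from
        Prod.ext (by simp) rfl]
      abel
    show t • (apex f i + ((0 : Fin n → ℝ), s)) + b ∈ g.newton
    rw [heq]
    exact newton_ray g (hmemb i) (mul_nonneg (le_of_lt htpos) hs)
  · -- backward direction
    intro hins x hxf
    by_contra hxg
    obtain ⟨i₀, hi₀⟩ := mem_cell_of_not_trop g hxg
    obtain ⟨t, htpos, b, ⟨q, hqN, hqv⟩, himg⟩ := hins (apex g i₀) (cell_extreme g hi₀)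
    have hqv' : t • q + b = apex g i₀ := hqv
    obtain ⟨i, j, hij, hi, hj⟩ := hxf
    have hev := eval_eq_of_cell g hi₀
    have key : ∀ m : Fin f.k, f.mono m x = f.eval x → t • apex f m + b = apex g i₀ := by
      intro m hm
      have hmem : t • apex f m + b ∈ g.newton := himg ⟨apex f m, apex_mem_newton f m, rfl⟩
      have h1 : g.mono i₀ x ≤ phi x (t • apex f m + b) := by
        rw [← hev]
        exact eval_le_phi g x hmem
      have h2 : f.eval x ≤ phi x q := eval_le_phi f x hqN
      have h3 : phi x (t • apex f m + b) = t * f.mono m x + phi x b := by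
        rw [phi_add, phi_smul, phi_apex]
      have h4 : g.mono i₀ x = t * phi x q + phi x b := by
        rw [← phi_apex g i₀ x, ← hqv', phi_add, phi_smul]
      have h5 : t * f.mono m x ≤ t * phi x q := by
        apply mul_le_mul_of_nonneg_left _ (le_of_lt htpos)
        rw [hm]
        exact h2
      have h6 : phi x (t • apex f m + b) ≤ g.mono i₀ x := by
        rw [h3, h4]
        linarith
      have h7 : phi x (t • apex f m + b) = g.mono i₀ x := le_antisymm h6 h1
      exact strict_min_unique g hi₀ _ hmem h7
    have hcanc : t • apex f i = t • apex f j :=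
      add_right_cancel ((key i hi).trans (key j hj).symm)
    exact hij (apex_injective f (smul_right_injective _ (ne_of_gt htpos) hcanc))

end Main

/-- `Trop(f) ⊆ Trop(g)` iff `N(f)` is totally inscribable in
`N(g)`: for every extreme point `v` of `N(g)` there are `t > 0` and a
translation such that the translate of the homothety `t · N(f)` contains `v`
and is contained in `N(g)`. (A homothety with ratio `t` and some center
followed by a translation is exactly a map `y ↦ t • y + b`.) -/
theorem trop_subset_iff_totally_inscribable {n : ℕ} (f g : TropPoly n) :
    f.tropSet ⊆ g.tropSet ↔
      ∀ v ∈ Set.extremePoints ℝ g.newton,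
        ∃ t : ℝ, 0 < t ∧ ∃ b : (Fin n → ℝ) × ℝ,
          v ∈ (fun y => t • y + b) '' f.newton ∧
            (fun y => t • y + b) '' f.newton ⊆ g.newton := by
  exact trop_subset_iff_totally_inscribable' f g
end

section
/- Let f and g be tropical polynomials in n variables. If for every vertex (extreme point) v of the Newton polyhedron N(g) ⊆ ℝ^{n+1} there exist a real number t > 0 and a translation s : ℝ^{n+1} → ℝ^{n+1} with v ∈ s(t·N(f)) and s(t·N(f)) ⊆ N(g), then Trop(f) ⊆ Trop(g). -/
/-!
Let `x ∈ Trop(f)` with `x ∉ Trop(g)`, and let `φ(z, a) = ⟨x, z⟩ + a`. Over `N(g)` the functional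
`φ` is minimised at exactly one lifted exponent `v = (a_i, c_i)`, which is therefore a vertex,
whereas over `N(f)` it is minimised at two distinct lifted exponents. A homothetic copy of `N(f)`
inside `N(g)` through `v` sends every minimiser of `φ` on `N(f)` to a minimiser on `N(g)`, i.e.
to `v`; by injectivity of the homothety the two minimisers of `N(f)` coincide.
-/

open Finset

section Convex

variable {𝕜 E : Type*} [Field 𝕜] [LinearOrder 𝕜] [IsStrictOrderedRing 𝕜] [AddCommGroup E]
  [Module 𝕜 E]

theorem convex_insert_halfSpace_gt (l : E →ₗ[𝕜] 𝕜) (v : E) :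
    Convex 𝕜 (insert v {w | l v < l w}) := by
  have hopen : Convex 𝕜 {w | l v < l w} := convex_halfSpace_gt l.isLinear _
  have hstar : ∀ w, l v < l w → ∀ a b : 𝕜, 0 ≤ a → 0 ≤ b → a + b = 1 →
      a • v + b • w ∈ insert v {w | l v < l w} := by
    intro w hw a b ha hb hab
    rcases hb.eq_or_lt with rfl | hb
    · simp [show a = 1 by simpa using hab]
    · right
      have hv : l v = a * l v + b * l v := by rw [← add_mul, hab, one_mul]
      simp only [Set.mem_ofPred_eq, map_add, map_smul, smul_eq_mul]
      nlinarith [mul_lt_mul_of_pos_left hw hb]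
  rintro p (rfl | hp) q (rfl | hq) a b ha hb hab
  · simp [← add_smul, hab]
  · exact hstar q hq a b ha hb hab
  · rw [add_comm]; exact hstar p hp b a hb ha (by rw [add_comm, hab])
  · exact Or.inr (hopen hp hq ha hb hab)

theorem mem_extremePoints_of_forall_eq_or_lt (l : E →ₗ[𝕜] 𝕜) {s : Set E} {v : E} (hv : v ∈ s)
    (hmin : ∀ w ∈ s, w = v ∨ l v < l w) : v ∈ s.extremePoints 𝕜 := by
  refine ⟨hv, fun x hx y hy ⟨a, b, ha, hb, hab, hxy⟩ => ?_⟩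
  by_contra hne
  have hlx : l v < l x := (hmin x hx).resolve_left hne
  have hly : l v ≤ l y := (hmin y hy).elim (fun h => h ▸ le_rfl) le_of_lt
  have hsum : a * l x + b * l y = l v := by
    rw [← hxy, map_add, map_smul, map_smul, smul_eq_mul, smul_eq_mul]
  have hv : l v = a * l v + b * l v := by rw [← add_mul, hab, one_mul]
  nlinarith [mul_lt_mul_of_pos_left hlx ha, mul_le_mul_of_nonneg_left hly hb.le]

/-- Every minimiser of `l` on `A` is sent to `v`. -/
theorem eq_of_isMinOn_of_homothety_subset (l : E →ₗ[𝕜] 𝕜) {s A : Set E} {v : E}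
    (hmin : ∀ w ∈ s, w = v ∨ l v < l w) {t : 𝕜} (ht : 0 < t) {b : E}
    (hsub : (fun y => t • y + b) '' A ⊆ s) (hv : v ∈ (fun y => t • y + b) '' A)
    {p q : E} (hp : p ∈ A) (hq : q ∈ A) (hpmin : IsMinOn l A p) (hqmin : IsMinOn l A q) :
    p = q := by
  obtain ⟨w, hw, rfl⟩ := hv
  have hmap : ∀ r ∈ A, IsMinOn l A r → t • r + b = t • w + b := by
    intro r hr hrmin
    refine (hmin _ (hsub ⟨r, hr, rfl⟩)).resolve_right fun hlt => ?_
    have hle : l r ≤ l w := isMinOn_iff.1 hrmin w hw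
    simp only [map_add, map_smul, smul_eq_mul] at hlt
    nlinarith [mul_le_mul_of_nonneg_left hle ht.le]
  have hpq := (hmap p hp hpmin).trans (hmap q hq hqmin).symm
  exact smul_right_injective E ht.ne' (add_right_cancel hpq)

end Convex

def phiL {n : ℕ} (x : Fin n → ℝ) : ((Fin n → ℝ) × ℝ) →ₗ[ℝ] ℝ where
  toFun := phi x
  map_add' p q := by
    simp only [phi, Prod.fst_add, Prod.snd_add, Pi.add_apply, mul_add, Finset.sum_add_distrib]
    ring
  map_smul' t p := by
    simp only [phi, Prod.smul_fst, Prod.smul_snd, Pi.smul_apply, smul_eq_mul, RingHom.id_apply,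
      Finset.mul_sum, mul_add]
    exact congrArg₂ _ (Finset.sum_congr rfl fun j _ => by ring) rfl

namespace TropPoly

variable {n : ℕ} (f : TropPoly n) {x : Fin n → ℝ}

def point (i : Fin f.k) : (Fin n → ℝ) × ℝ :=
  (fun j => (f.a i j : ℝ), f.c i)

theorem point_injective : Function.Injective f.point := by
  intro i j hij
  have hc : f.c i = f.c j := congrArg Prod.snd hij
  have ha : ∀ l, f.a i l = f.a j l := fun l => by
    simpa [point] using congrFun (congrArg Prod.fst hij) l
  exact f.distinct (Prod.ext (funext ha) hc)

theorem point_mem_newton (i : Fin f.k) : f.point i ∈ f.newton :=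
  subset_convexHull ℝ _ ⟨i, rfl, le_rfl⟩

theorem phiL_of_fst_eq {i : Fin f.k} {p : (Fin n → ℝ) × ℝ}
    (hp : p.1 = fun j => (f.a i j : ℝ)) : phiL x p = f.mono i x + (p.2 - f.c i) := by
  simp only [phiL, LinearMap.coe_mk, AddHom.coe_mk, phi, mono, hp, mul_comm (x _)]
  ring

theorem phiL_point (i : Fin f.k) : phiL x (f.point i) = f.mono i x := by
  rw [f.phiL_of_fst_eq (p := f.point i) rfl, point, sub_self, add_zero]

theorem exists_mono_eq_eval (x : Fin n → ℝ) : ∃ i, f.mono i x = f.eval x := by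
  obtain ⟨i, -, hi⟩ := Finset.exists_mem_eq_inf' ⟨⟨0, f.hk⟩, Finset.mem_univ _⟩ (f.mono · x)
  exact ⟨i, hi.symm⟩

theorem eval_le_phiL {p : (Fin n → ℝ) × ℝ} (hp : p ∈ f.newton) : f.eval x ≤ phiL x p := by
  refine convexHull_min ?_ (convex_halfSpace_ge (phiL x).isLinear _) hp
  rintro p ⟨i, hpi, hci⟩
  have hi : f.eval x ≤ f.mono i x := Finset.inf'_le _ (Finset.mem_univ i)
  simp only [Set.mem_ofPred_eq, f.phiL_of_fst_eq hpi]
  linarith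

theorem isMinOn_point {i : Fin f.k} (hi : f.mono i x = f.eval x) :
    IsMinOn (phiL x) f.newton (f.point i) :=
  isMinOn_iff.2 fun _ hp => (f.phiL_point i).trans hi ▸ f.eval_le_phiL hp

theorem eq_point_or_lt_of_notMem_tropSet (hx : x ∉ f.tropSet) {i : Fin f.k}
    (hi : f.mono i x = f.eval x) :
    ∀ p ∈ f.newton, p = f.point i ∨ phiL x (f.point i) < phiL x p := by
  refine fun p hp => convexHull_min ?_ (convex_insert_halfSpace_gt _ _) hp
  rintro p ⟨j, hpj, hcj⟩
  rw [Set.mem_insert_iff, Set.mem_ofPred_eq, f.phiL_point, f.phiL_of_fst_eq hpj, hi]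
  have hj : f.eval x ≤ f.mono j x := Finset.inf'_le _ (Finset.mem_univ j)
  by_cases hji : j = i
  · subst hji
    rcases hcj.eq_or_lt with hc | hc
    · exact Or.inl (Prod.ext hpj hc.symm)
    · exact Or.inr (by linarith)
  · have hj : f.eval x < f.mono j x := hj.lt_of_ne fun h => hx ⟨j, i, hji, h.symm, hi⟩
    exact Or.inr (by linarith)

end TropPoly

/-- if for every extreme point `v` of `N(g)` some translate of a
homothety `t · N(f)` (with `t > 0`) is inscribed in `N(g)` at `v`, then
`Trop(f) ⊆ Trop(g)`. -/
theorem trop_subset_of_totally_inscribable {n : ℕ} (f g : TropPoly n)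
    (h : ∀ v ∈ Set.extremePoints ℝ g.newton,
      ∃ t : ℝ, 0 < t ∧ ∃ b : (Fin n → ℝ) × ℝ,
        v ∈ (fun y => t • y + b) '' f.newton ∧
          (fun y => t • y + b) '' f.newton ⊆ g.newton) :
    f.tropSet ⊆ g.tropSet := by
  intro x ⟨i, j, hij, hi, hj⟩
  by_contra hx
  obtain ⟨i₀, hi₀⟩ := g.exists_mono_eq_eval x
  have hmin := g.eq_point_or_lt_of_notMem_tropSet hx hi₀
  obtain ⟨t, ht, b, hv, hsub⟩ :=
    h _ (mem_extremePoints_of_forall_eq_or_lt _ (g.point_mem_newton i₀) hmin)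
  exact hij <| f.point_injective <| eq_of_isMinOn_of_homothety_subset _ hmin ht hsub hv
    (f.point_mem_newton i) (f.point_mem_newton j) (f.isMinOn_point hi) (f.isMinOn_point hj)
end

section
/- Let f be a tropical polynomial in n variables. For every x ∈ ℝⁿ, the infimum of the linear functional φ_x over the Newton polyhedron N(f) is attained, and its minimum value equals f(x) = min_{1≤i≤k} (⟨a_i, x⟩ + c_i). -/
open Finset

/-- for every `x ∈ ℝⁿ` the infimum of `φ_x` over `N(f)` is
attained, and its minimum value equals `f(x) = min_i (⟨a i, x⟩ + c i)`. -/
theorem isLeast_phi_image_newton {n : ℕ} (f : TropPoly n) (x : Fin n → ℝ) :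
    IsLeast (phi x '' f.newton) (f.eval x) := by
  constructor
  · -- membership: pick i achieving the min
    obtain ⟨i, -, hi⟩ := Finset.exists_mem_eq_inf' ⟨⟨0, f.hk⟩, Finset.mem_univ _⟩
      (fun i => f.mono i x)
    refine ⟨((fun j => (f.a i j : ℝ)), f.c i), subset_convexHull ℝ _ ⟨i, rfl, le_refl _⟩, ?_⟩
    have hm : phi x ((fun j => (f.a i j : ℝ)), f.c i) = f.mono i x := by
      simp [phi, TropPoly.mono, mul_comm]
    exact hm.trans hi.symm
  · rintro y ⟨p, hp, rfl⟩
    have hlin : IsLinearMap ℝ (phi x) := by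
      constructor <;> intro p q <;>
        simp [phi, Finset.mul_sum, mul_add, mul_left_comm, Finset.sum_add_distrib,
          add_add_add_comm, smul_eq_mul]
    have hconv : Convex ℝ {q : (Fin n → ℝ) × ℝ | f.eval x ≤ phi x q} :=
      convex_halfSpace_ge hlin (f.eval x)
    have hsub : {q : (Fin n → ℝ) × ℝ |
        ∃ i : Fin f.k, q.1 = (fun j => (f.a i j : ℝ)) ∧ f.c i ≤ q.2} ⊆
        {q | f.eval x ≤ phi x q} := by
      rintro q ⟨i, hq1, hq2⟩
      have h1 : f.eval x ≤ f.mono i x := Finset.inf'_le _ (Finset.mem_univ i)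
      have h2 : f.mono i x ≤ phi x q := by
        simp only [phi, TropPoly.mono, hq1]
        exact add_le_add (le_of_eq (Finset.sum_congr rfl fun j _ => mul_comm _ _)) hq2
      exact le_trans h1 h2
    have := convexHull_min hsub hconv hp
    exact this
end

section
/- Let f be a tropical polynomial in n variables and let x ∈ ℝⁿ with x ∉ Trop(f). Then the linear functional φ_x attains its minimum over the Newton polyhedron N(f) at exactly one point of N(f), and this point is a vertex (extreme point) of N(f). -/
open Finset

/-
The functional `φ_x` takes the value `⟨a_i, x⟩ + c_i` at the apex `(a_i, c_i)` of the `i`-th ray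
and grows along the ray, so off `Trop(f)` one apex `p` is strictly below every other point of
every ray. Hence all rays lie in the convex set `{p} ∪ {φ_x > φ_x(p)}`, and so does `N(f)`;
a point of a set `C ⊆ {p} ∪ {φ_x > φ_x(p)}` is the unique minimiser of `φ_x` on `C`, and it
cannot lie inside an open segment of `C`.
-/

section StrictMinimizer

theorem le_of_mem_insert_setOf_lt {α β : Type*} [Preorder β] {g : α → β} {p q : α}
    (hq : q ∈ insert p {q | g p < g q}) : g p ≤ g q :=
  hq.elim (fun h => h ▸ le_rfl) le_of_lt

variable {𝕜 E : Type*} [Field 𝕜] [LinearOrder 𝕜] [IsStrictOrderedRing 𝕜]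
  [AddCommGroup E] [Module 𝕜 E]

theorem lt_map_combo_of_mem_insert_setOf_lt (φ : E →ₗ[𝕜] 𝕜) {p x y : E} {a b : 𝕜}
    (ha : 0 < a) (hb : 0 < b) (hab : a + b = 1) (hx : x ∈ insert p {q | φ p < φ q})
    (hy : y ∈ insert p {q | φ p < φ q}) (hxp : x ≠ p) : φ p < φ (a • x + b • y) := by
  have hx' : φ p < φ x := hx.resolve_left hxp
  have hy' := le_of_mem_insert_setOf_lt hy
  calc φ p = a * φ p + b * φ p := by rw [← add_mul, hab, one_mul]
    _ < a * φ x + b * φ y := add_lt_add_of_lt_of_le (mul_lt_mul_of_pos_left hx' ha)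
        (mul_le_mul_of_nonneg_left hy' hb.le)
    _ = φ (a • x + b • y) := by simp

theorem convex_insert_setOf_lt (φ : E →ₗ[𝕜] 𝕜) (p : E) :
    Convex 𝕜 (insert p {q | φ p < φ q}) := by
  refine convex_iff_forall_pos.2 fun x hx y hy a b ha hb hab => ?_
  by_cases hxp : x = p
  · by_cases hyp : y = p
    · exact Or.inl (by rw [hxp, hyp, Convex.combo_self hab])
    · rw [add_comm]
      exact Or.inr (lt_map_combo_of_mem_insert_setOf_lt φ hb ha (by rwa [add_comm]) hy hx hyp)
  · exact Or.inr (lt_map_combo_of_mem_insert_setOf_lt φ ha hb hab hx hy hxp)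

theorem mem_extremePoints_of_subset_insert_setOf_lt (φ : E →ₗ[𝕜] 𝕜) {C : Set E} {p : E}
    (hp : p ∈ C) (hC : C ⊆ insert p {q | φ p < φ q}) : p ∈ C.extremePoints 𝕜 := by
  refine ⟨hp, fun q hq r hr ⟨a, b, ha, hb, hab, hpqr⟩ => ?_⟩
  by_contra hqp
  have := lt_map_combo_of_mem_insert_setOf_lt φ ha hb hab (hC hq) (hC hr) hqp
  exact this.ne (congrArg φ hpqr).symm

end StrictMinimizer

def phiLinear {n : ℕ} (x : Fin n → ℝ) : ((Fin n → ℝ) × ℝ) →ₗ[ℝ] ℝ where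
  toFun := phi x
  map_add' p q := by
    simp only [phi, Prod.fst_add, Prod.snd_add, Pi.add_apply, mul_add, sum_add_distrib]
    ring
  map_smul' t p := by
    simp only [phi, Prod.smul_fst, Prod.smul_snd, Pi.smul_apply, smul_eq_mul,
      RingHom.id_apply, mul_add, mul_sum]
    congr 1
    exact sum_congr rfl fun j _ => by ring

namespace TropPoly

variable {n : ℕ} (f : TropPoly n)

theorem phi_eq_mono_add {i : Fin f.k} (x : Fin n → ℝ) {q : (Fin n → ℝ) × ℝ}
    (hq : q.1 = fun j => (f.a i j : ℝ)) : phi x q = f.mono i x + (q.2 - f.c i) := by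
  simp only [phi, mono, hq, mul_comm (x _)]
  ring

theorem exists_strict_min_mono_of_not_mem_tropSet {x : Fin n → ℝ} (hx : x ∉ f.tropSet) :
    ∃ i₀, ∀ i, i ≠ i₀ → f.mono i₀ x < f.mono i x := by
  obtain ⟨i₀, -, hi₀⟩ := exists_mem_eq_inf' ⟨⟨0, f.hk⟩, mem_univ _⟩ (fun i => f.mono i x)
  have hmin : ∀ i, f.eval x ≤ f.mono i x := fun i => inf'_le _ (mem_univ i)
  refine ⟨i₀, fun i hi => lt_of_le_of_ne (hi₀ ▸ hmin i) fun h => hx ?_⟩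
  exact ⟨i, i₀, hi, h ▸ hi₀.symm, hi₀.symm⟩

theorem newton_subset_insert_setOf_lt {x : Fin n → ℝ} (hx : x ∉ f.tropSet) :
    ∃ p ∈ f.newton, f.newton ⊆ insert p {q | phi x p < phi x q} := by
  obtain ⟨i₀, hi₀⟩ := f.exists_strict_min_mono_of_not_mem_tropSet hx
  set p : (Fin n → ℝ) × ℝ := (fun j => (f.a i₀ j : ℝ), f.c i₀)
  have hpφ : phi x p = f.mono i₀ x := by simp [f.phi_eq_mono_add x (q := p) rfl, p]
  refine ⟨p, subset_convexHull ℝ _ ⟨i₀, rfl, le_rfl⟩,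
    convexHull_min ?_ (convex_insert_setOf_lt (phiLinear x) p)⟩
  rintro q ⟨i, hq, hcq⟩
  have hqφ := f.phi_eq_mono_add x hq
  obtain rfl | hi := eq_or_ne i i₀
  · rcases hcq.eq_or_lt with hc | hc
    · exact Or.inl (Prod.ext hq hc.symm)
    · exact Or.inr (show phi x p < phi x q by linarith)
  · exact Or.inr (show phi x p < phi x q by linarith [hi₀ i hi])

end TropPoly

/-- if `x ∉ Trop(f)`, then `φ_x` attains its minimum over `N(f)`
at exactly one point, and this point is an extreme point of `N(f)`. -/
theorem unique_extreme_minimizer_of_not_mem_tropSet {n : ℕ} (f : TropPoly n)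
    (x : Fin n → ℝ) (hx : x ∉ f.tropSet) :
    ∃ p : (Fin n → ℝ) × ℝ,
      (p ∈ f.newton ∧ ∀ r ∈ f.newton, phi x p ≤ phi x r) ∧
      (∀ q : (Fin n → ℝ) × ℝ,
        (q ∈ f.newton ∧ ∀ r ∈ f.newton, phi x q ≤ phi x r) → q = p) ∧
      p ∈ Set.extremePoints ℝ f.newton := by
  obtain ⟨p, hpN, hN⟩ := f.newton_subset_insert_setOf_lt hx
  have hmin : ∀ r ∈ f.newton, phi x p ≤ phi x r := fun r hr => le_of_mem_insert_setOf_lt (hN hr)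
  refine ⟨p, ⟨hpN, hmin⟩, fun q ⟨hqN, hq⟩ => ?_,
    mem_extremePoints_of_subset_insert_setOf_lt (phiLinear x) hpN hN⟩
  exact (hN hqN).resolve_right (hq p hpN).not_gt
end

section
/- Let g be a tropical polynomial in n variables and let v be a vertex (extreme point) of its Newton polyhedron N(g) ⊆ ℝ^{n+1}. Let p : ℝ^{n+1} → ℝⁿ be the projection forgetting the last coordinate, and let C = v + cone(N(g) − v) be the tangent cone of N(g) at v. Then there exists an open ball B ⊆ ℝⁿ centered at p(v) such that p⁻¹(B) ∩ N(g) = p⁻¹(B) ∩ C. -/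
open Finset

namespace TropPoly

variable {n : ℕ}

def pt (g : TropPoly n) (i : Fin g.k) : (Fin n → ℝ) × ℝ :=
  ((fun j => (g.a i j : ℝ)), g.c i)

theorem newton_rep (g : TropPoly n) :
    g.newton = {z | ∃ (lam : Fin g.k → ℝ) (mu : ℝ),
      (∀ i, 0 ≤ lam i) ∧ (∑ i, lam i = 1) ∧ 0 ≤ mu ∧
      z = ∑ i, lam i • g.pt i + mu • ((0, 1) : (Fin n → ℝ) × ℝ)} := by
  apply le_antisymm
  · apply convexHull_min
    · rintro p ⟨i, h1, h2⟩
      refine ⟨fun j => if j = i then 1 else 0, p.2 - g.c i, ?_, ?_, ?_, ?_⟩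
      · intro j; positivity
      · simp
      · linarith
      · have : (∑ j, (if j = i then (1:ℝ) else 0) • g.pt j) = g.pt i := by
          rw [Finset.sum_eq_single i]
          · simp
          · intro b _ hb; simp [hb]
          · simp
        rw [this]
        ext
        · simp [pt, h1]
        · simp [pt]
    · rintro x ⟨lx, mx, hx0, hx1, hmx, rfl⟩ y ⟨ly, my, hy0, hy1, hmy, rfl⟩ a b ha hb hab
      refine ⟨fun i => a * lx i + b * ly i, a * mx + b * my, ?_, ?_, ?_, ?_⟩
      · exact fun i => add_nonneg (mul_nonneg ha (hx0 i)) (mul_nonneg hb (hy0 i))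
      · rw [Finset.sum_add_distrib, ← Finset.mul_sum, ← Finset.mul_sum, hx1, hy1]
        linarith
      · exact add_nonneg (mul_nonneg ha hmx) (mul_nonneg hb hmy)
      · simp only [smul_add, Finset.smul_sum, smul_smul, add_smul, Finset.sum_add_distrib]
        abel
  · rintro z ⟨lam, mu, h0, h1, hmu, rfl⟩
    have hmem : ∀ i : Fin g.k, g.pt i + mu • ((0, 1) : (Fin n → ℝ) × ℝ) ∈
        {p : (Fin n → ℝ) × ℝ | ∃ i : Fin g.k, p.1 = (fun j => (g.a i j : ℝ)) ∧ g.c i ≤ p.2} := by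
      intro i
      refine ⟨i, ?_, ?_⟩
      · simp [pt]
      · simp [pt]; linarith
    have := Finset.centerMass_mem_convexHull (Finset.univ : Finset (Fin g.k))
      (fun i _ => h0 i) (by rw [h1]; norm_num)
      (fun i _ => hmem i)
    rw [Finset.centerMass_eq_of_sum_1 _ _ h1] at this
    have he : ∑ i : Fin g.k, lam i • (g.pt i + mu • ((0,1):(Fin n → ℝ)×ℝ))
        = ∑ i, lam i • g.pt i + mu • ((0,1):(Fin n → ℝ)×ℝ) := by
      simp only [smul_add, Finset.sum_add_distrib]
      rw [← Finset.sum_smul, h1, one_smul]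
    rwa [he] at this

theorem pt_mem_newton (g : TropPoly n) (i : Fin g.k) (mu : ℝ) (hmu : 0 ≤ mu) :
    g.pt i + mu • ((0, 1) : (Fin n → ℝ) × ℝ) ∈ g.newton := by
  apply subset_convexHull
  refine ⟨i, ?_, ?_⟩
  · simp [pt]
  · simp [pt]; linarith

theorem vertex_eq_pt (g : TropPoly n) (v : (Fin n → ℝ) × ℝ)
    (hv : v ∈ Set.extremePoints ℝ g.newton) : ∃ i0 : Fin g.k, v = g.pt i0 := by
  have hvS := extremePoints_convexHull_subset hv
  obtain ⟨i0, h1, h2⟩ := hvS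
  refine ⟨i0, ?_⟩
  rcases eq_or_lt_of_le h2 with h | h
  · ext
    · rw [h1]; rfl
    · rw [← h]; rfl
  -- c i0 < v.2 : contradiction with extremality
  exfalso
  obtain ⟨hvN, hext⟩ := hv
  set x : (Fin n → ℝ) × ℝ := (v.1, g.c i0) with hx
  set y : (Fin n → ℝ) × ℝ := (v.1, v.2 + 1) with hy
  have hxN : x ∈ g.newton := by
    apply subset_convexHull; exact ⟨i0, h1, le_refl _⟩
  have hyN : y ∈ g.newton := by
    apply subset_convexHull; exact ⟨i0, h1, by show g.c i0 ≤ v.2 + 1; linarith⟩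
  have hD : (0:ℝ) < v.2 + 1 - g.c i0 := by linarith
  set t : ℝ := 1 / (v.2 + 1 - g.c i0) with ht
  have ht0 : 0 < t := by positivity
  have ht1 : t < 1 := by
    rw [ht, div_lt_one hD]; linarith
  have hseg : v ∈ openSegment ℝ x y := by
    have hfst : (t • x + (1-t) • y).1 = v.1 := by
      show t • v.1 + (1-t) • v.1 = v.1
      rw [← add_smul]; norm_num
    have hsnd : (t • x + (1-t) • y).2 = v.2 := by
      show t * g.c i0 + (1-t) * (v.2+1) = v.2
      rw [ht]
      field_simp
      ring
    exact ⟨t, 1-t, ht0, by linarith, by ring, Prod.ext hfst hsnd⟩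
  have hxv := hext hxN hyN hseg
  have : g.c i0 = v.2 := congrArg Prod.snd hxv
  linarith

theorem exists_sep (g : TropPoly n) (v : (Fin n → ℝ) × ℝ)
    (hv : v ∈ Set.extremePoints ℝ g.newton) :
    ∃ f : ((Fin n → ℝ) × ℝ) →L[ℝ] ℝ,
      (∀ i, g.pt i ≠ v → 0 < f (g.pt i - v)) ∧ 0 < f ((0, 1) : (Fin n → ℝ) × ℝ) := by
  classical
  set e : (Fin n → ℝ) × ℝ := (0, 1) with he
  set K : Set ((Fin n → ℝ) × ℝ) :=
    insert e ((fun i => g.pt i - v) '' {i | g.pt i ≠ v}) with hK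
  have hKfin : K.Finite := (Set.toFinite _).insert e
  obtain ⟨i0, hi0⟩ := g.vertex_eq_pt v hv
  -- the shifted polyhedron minus 0 is convex
  have hconv : Convex ℝ ((fun z => z - v) '' (g.newton \ {v})) := by
    have h1 : Convex ℝ (g.newton \ {v}) :=
      ((convex_convexHull ℝ _).mem_extremePoints_iff_convex_diff.mp hv).2
    rw [show (fun z : (Fin n → ℝ) × ℝ => z - v) = (fun z => -v + z) from
      funext fun z => by abel]
    exact h1.translate (-v)
  have hKsub : K ⊆ (fun z => z - v) '' (g.newton \ {v}) := by
    rintro z (rfl | ⟨i, hi, rfl⟩)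
    · refine ⟨v + e, ⟨?_, ?_⟩, by show v + e - v = e; abel⟩
      · have := g.pt_mem_newton i0 1 zero_le_one
        rw [← hi0] at this
        simpa using this
      · simp only [Set.mem_singleton_iff]
        intro h
        have h2 := congrArg Prod.snd h
        simp [he] at h2
    · refine ⟨g.pt i, ⟨?_, hi⟩, rfl⟩
      have := g.pt_mem_newton i 0 (le_refl 0)
      simpa using this
  have h0K : (0 : (Fin n → ℝ) × ℝ) ∉ convexHull ℝ K := by
    intro h0
    have : (0 : (Fin n → ℝ) × ℝ) ∈ (fun z => z - v) '' (g.newton \ {v}) :=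
      convexHull_min hKsub hconv h0
    obtain ⟨z, ⟨_, hz2⟩, hz3⟩ := this
    apply hz2
    have : z = v := by
      have : z - v = 0 := hz3
      have := sub_eq_zero.mp this
      exact this
    simp [this]
  obtain ⟨f, u, hfu, hf⟩ := geometric_hahn_banach_point_closed
    (convex_convexHull ℝ K) ((hKfin.isCompact_convexHull (𝕜 := ℝ)).isClosed) h0K
  have hu : 0 < u := by simpa using hfu
  refine ⟨f, ?_, ?_⟩
  · intro i hi
    have : g.pt i - v ∈ K := Set.mem_insert_of_mem _ ⟨i, hi, rfl⟩
    have := hf _ (subset_convexHull ℝ K this)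
    linarith
  · have : e ∈ K := Set.mem_insert _ _
    have := hf _ (subset_convexHull ℝ K this)
    rw [he] at this
    linarith

end TropPoly

lemma no_neg_vert {n k : ℕ} (w : Fin k → (Fin n → ℝ) × ℝ) (ok : Fin k → Prop)
    (f : ((Fin n → ℝ) × ℝ) →L[ℝ] ℝ) (hf1 : ∀ i, ok i → 0 < f (w i))
    (hf2 : 0 < f ((0,1) : (Fin n → ℝ) × ℝ))
    (β : Fin k → ℝ) (hβ0 : ∀ i, 0 ≤ β i) (hok : ∀ i, β i ≠ 0 → ok i)
    (ζ : ℝ) (hζ : ζ < 0)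
    (hsum : ∑ i, β i • w i = ζ • ((0,1) : (Fin n → ℝ) × ℝ)) : False := by
  have h1 : f (∑ i, β i • w i) = ∑ i, β i * f (w i) := by
    rw [map_sum]
    exact Finset.sum_congr rfl fun i _ => by rw [map_smul, smul_eq_mul]
  have h2 : (0:ℝ) ≤ ∑ i, β i * f (w i) := by
    apply Finset.sum_nonneg
    intro i _
    rcases eq_or_ne (β i) 0 with h | h
    · simp [h]
    · exact mul_nonneg (hβ0 i) (le_of_lt (hf1 i (hok i h)))
  rw [hsum, map_smul, smul_eq_mul] at h1
  nlinarith

lemma descent {n k : ℕ} (w : Fin k → (Fin n → ℝ) × ℝ) (ok : Fin k → Prop)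
    (f : ((Fin n → ℝ) × ℝ) →L[ℝ] ℝ) (hf1 : ∀ i, ok i → 0 < f (w i))
    (hf2 : 0 < f ((0,1) : (Fin n → ℝ) × ℝ)) :
    ∀ (N : ℕ) (s : Fin k → ℝ), (Finset.univ.filter fun i => s i ≠ 0).card ≤ N →
    (∀ i, 0 ≤ s i) → (∀ i, s i ≠ 0 → ok i) →
    ∃ (s' : Fin k → ℝ) (r' : ℝ), (∀ i, 0 ≤ s' i) ∧ 0 ≤ r' ∧ (∀ i, s' i ≠ 0 → ok i) ∧
      (∑ i, s' i • w i + r' • ((0,1) : (Fin n → ℝ) × ℝ) = ∑ i, s i • w i) ∧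
      LinearIndependent ℝ (fun i : {i // s' i ≠ 0} => (w i.1).1) := by
  classical
  intro N
  induction N with
  | zero =>
    intro s hcard hs0 hok
    have hall : ∀ i, s i = 0 := by
      intro i
      by_contra h
      have : i ∈ Finset.univ.filter fun i => s i ≠ 0 := by simp [h]
      have := Finset.card_pos.mpr ⟨i, this⟩
      omega
    refine ⟨s, 0, hs0, le_refl _, hok, by simp, ?_⟩
    have : IsEmpty {i // s i ≠ 0} := ⟨fun ⟨i, hi⟩ => hi (hall i)⟩
    exact linearIndependent_empty_type
  | succ N ih =>
    intro s hcard hs0 hok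
    by_cases hli : LinearIndependent ℝ (fun i : {i // s i ≠ 0} => (w i.1).1)
    · exact ⟨s, 0, hs0, le_refl _, hok, by simp, hli⟩
    -- extract a dependence γ supported on supp s
    obtain ⟨gco, hgsum, j0, hj0⟩ := Fintype.not_linearIndependent_iff.mp hli
    set γ : Fin k → ℝ := fun i => if hi : s i ≠ 0 then gco ⟨i, hi⟩ else 0 with hγ
    have hγsupp : ∀ i, γ i ≠ 0 → s i ≠ 0 := by
      intro i hi
      by_contra h
      apply hi
      simp [hγ, h]
    have hγex : ∃ i, γ i ≠ 0 := ⟨j0.1, by simp [hγ, j0.2, hj0]⟩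
    have hγh : ∑ i, γ i • (w i).1 = 0 := by
      rw [← Finset.sum_filter_of_ne (p := fun i => s i ≠ 0)
        (by intro i _ h; exact hγsupp i (fun h0 => h (by rw [h0, zero_smul])))]
      rw [Finset.sum_subtype (p := fun i => s i ≠ 0) (Finset.univ.filter fun i => s i ≠ 0)
        (fun i => by simp) (fun i => γ i • (w i).1)]
      rw [← hgsum]
      apply Finset.sum_congr rfl
      intro i _
      congr 1
      simp [hγ, i.2]
    set ζ : ℝ := ∑ i, γ i * (w i).2 with hζdef
    have hγw : ∑ i, γ i • w i = ζ • ((0,1) : (Fin n → ℝ) × ℝ) := by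
      apply Prod.ext
      · rw [Prod.fst_sum]
        simpa using hγh
      · rw [Prod.snd_sum]
        simp [hζdef]
    -- find γ' with nonneg vertical part and a positive coefficient
    have main : ∃ (γ' : Fin k → ℝ) (ζ' : ℝ), (∀ i, γ' i ≠ 0 → s i ≠ 0) ∧ 0 ≤ ζ' ∧
        (∑ i, γ' i • w i = ζ' • ((0,1) : (Fin n → ℝ) × ℝ)) ∧ ∃ i, 0 < γ' i := by
      rcases le_or_gt 0 ζ with hζ | hζ
      · by_cases hpos : ∃ i, 0 < γ i
        · exact ⟨γ, ζ, hγsupp, hζ, hγw, hpos⟩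
        · push_neg at hpos
          rcases eq_or_lt_of_le hζ with hζ0 | hζ0
          · refine ⟨fun i => -γ i, -ζ, ?_, by linarith, ?_, ?_⟩
            · intro i hi; exact hγsupp i (by simpa using hi)
            · simp only [neg_smul]
              rw [Finset.sum_neg_distrib, hγw, ← neg_smul]
            · obtain ⟨i, hi⟩ := hγex
              exact ⟨i, show (0:ℝ) < -γ i from neg_pos.mpr (lt_of_le_of_ne (hpos i) hi)⟩
          · exfalso
            apply no_neg_vert w ok f hf1 hf2 (fun i => -γ i)
              (fun i => by show (0:ℝ) ≤ -γ i; linarith [hpos i])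
              (fun i hi => hok _ (hγsupp i (by simpa using hi)))
              (-ζ) (by linarith)
            simp only [neg_smul]
            rw [Finset.sum_neg_distrib, hγw, ← neg_smul]
      · by_cases hpos : ∃ i, 0 < -γ i
        · refine ⟨fun i => -γ i, -ζ, ?_, by linarith, ?_, hpos⟩
          · intro i hi; exact hγsupp i (by simpa using hi)
          · simp only [neg_smul]
            rw [Finset.sum_neg_distrib, hγw, ← neg_smul]
        · push_neg at hpos
          exfalso
          apply no_neg_vert w ok f hf1 hf2 γ
            (fun i => by have h := hpos i; simp only [neg_nonpos] at h; exact h)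
            (fun i hi => hok _ (hγsupp i hi)) ζ hζ hγw
    obtain ⟨γ', ζ', hγ'supp, hζ'0, hγ'w, iex, hiex⟩ := main
    -- the descent step
    set Ip : Finset (Fin k) := Finset.univ.filter fun i => 0 < γ' i with hIp
    have hIpne : Ip.Nonempty := ⟨iex, by simp [hIp, hiex]⟩
    set τ : ℝ := Ip.inf' hIpne (fun i => s i / γ' i) with hτ
    have hspos : ∀ i ∈ Ip, 0 < s i := by
      intro i hi
      rw [hIp, Finset.mem_filter] at hi
      exact lt_of_le_of_ne (hs0 i) (Ne.symm (hγ'supp i (ne_of_gt hi.2)))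
    have hτpos : 0 < τ := by
      rw [hτ, Finset.lt_inf'_iff]
      intro i hi
      have h1 := hspos i hi
      rw [hIp, Finset.mem_filter] at hi
      exact div_pos h1 hi.2
    obtain ⟨istar, histar, hτeq⟩ := Finset.exists_mem_eq_inf' hIpne (fun i => s i / γ' i)
    rw [← hτ] at hτeq
    have histar2 : 0 < γ' istar := by
      rw [hIp, Finset.mem_filter] at histar; exact histar.2
    set s'' : Fin k → ℝ := fun i => s i - τ * γ' i with hs''
    have hs''0 : ∀ i, 0 ≤ s'' i := by
      intro i
      rcases le_or_gt (γ' i) 0 with h | h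
      · have : τ * γ' i ≤ 0 := mul_nonpos_of_nonneg_of_nonpos (le_of_lt hτpos) h
        have := hs0 i
        simp only [hs'']
        linarith
      · have hi : i ∈ Ip := by simp [hIp, h]
        have : τ ≤ s i / γ' i := by rw [hτ]; exact Finset.inf'_le _ hi
        have h3 := (le_div_iff₀ h).mp this
        show (0:ℝ) ≤ s i - τ * γ' i
        linarith
    have hs''supp : ∀ i, s'' i ≠ 0 → s i ≠ 0 := by
      intro i hi
      by_contra h
      apply hi
      have : γ' i = 0 := by
        by_contra h2
        exact (hγ'supp i h2) h
      simp [hs'', h, this]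
    have hs''star : s'' istar = 0 := by
      show s istar - τ * γ' istar = 0
      rw [hτeq, div_mul_cancel₀ _ (ne_of_gt histar2)]
      ring
    have hcard'' : (Finset.univ.filter fun i => s'' i ≠ 0).card ≤ N := by
      have hsub : (Finset.univ.filter fun i => s'' i ≠ 0) ⊆
          (Finset.univ.filter fun i => s i ≠ 0).erase istar := by
        intro i hi
        rw [Finset.mem_filter] at hi
        rw [Finset.mem_erase]
        refine ⟨?_, by simp [hs''supp i hi.2]⟩
        intro h
        rw [h] at hi
        exact hi.2 hs''star
      have h1 := Finset.card_le_card hsub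
      have h2 : istar ∈ Finset.univ.filter fun i => s i ≠ 0 := by
        simp only [Finset.mem_filter]
        refine ⟨Finset.mem_univ _, ?_⟩
        have := hspos istar histar
        linarith
      rw [Finset.card_erase_of_mem h2] at h1
      omega
    have hsum'' : ∑ i, s'' i • w i + (τ * ζ') • ((0,1) : (Fin n → ℝ) × ℝ) = ∑ i, s i • w i := by
      have : ∑ i, s'' i • w i = ∑ i, s i • w i - τ • ∑ i, γ' i • w i := by
        rw [Finset.smul_sum, ← Finset.sum_sub_distrib]
        apply Finset.sum_congr rfl
        intro i _
        simp only [hs'']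
        rw [sub_smul, smul_smul]
      rw [this, hγ'w, smul_smul]
      abel
    obtain ⟨s', r', a1, a2, a3, a4, a5⟩ := ih s'' hcard'' hs''0 (fun i hi => hok i (hs''supp i hi))
    refine ⟨s', r' + τ * ζ', a1, by positivity, a3, ?_, a5⟩
    rw [add_smul, ← add_assoc, a4, hsum'']

lemma bound_aux {n k : ℕ} (h : Fin k → (Fin n → ℝ)) (I : Finset (Fin k))
    (hli : LinearIndependent ℝ (fun i : ↥I => h i.1)) :
    ∃ C : ℝ, 0 < C ∧ ∀ c : Fin k → ℝ, (∀ i, i ∉ I → c i = 0) →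
      |∑ i, c i| ≤ C * ‖∑ i, c i • h i‖ := by
  classical
  let T : (↥I → ℝ) →ₗ[ℝ] (Fin n → ℝ) :=
    { toFun := fun c => ∑ i, c i • h i.1
      map_add' := by intro x y; simp [add_smul, Finset.sum_add_distrib]
      map_smul' := by intro m x; simp [smul_smul, Finset.smul_sum] }
  have hTinj : Function.Injective T := by
    rw [← LinearMap.ker_eq_bot, LinearMap.ker_eq_bot']
    intro c hc
    have := Fintype.linearIndependent_iff.mp hli c hc
    funext i
    exact this i
  let eqv := LinearEquiv.ofInjective T hTinj
  let sumL : (↥I → ℝ) →ₗ[ℝ] ℝ :=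
    { toFun := fun c => ∑ i, c i
      map_add' := by intro x y; simp [Finset.sum_add_distrib]
      map_smul' := by intro m x; simp [Finset.mul_sum] }
  let φ : (LinearMap.range T) →ₗ[ℝ] ℝ := sumL.comp eqv.symm.toLinearMap
  let φ' := LinearMap.toContinuousLinearMap φ
  refine ⟨‖φ'‖ + 1, by positivity, ?_⟩
  intro c hc
  set cI : ↥I → ℝ := fun i => c i.1 with hcI
  have hsum1 : ∑ i, c i = ∑ i : ↥I, cI i := by
    rw [← Finset.sum_subtype (p := fun i => i ∈ I) I (fun i => Iff.rfl) c]
    exact (Finset.sum_subset (Finset.subset_univ I) (fun x _ hx => hc x hx)).symm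
  have hsum2 : ∑ i, c i • h i = T cI := by
    show _ = ∑ i : ↥I, cI i • h i.1
    rw [← Finset.sum_subtype (p := fun i => i ∈ I) I (fun i => Iff.rfl) (fun i => c i • h i)]
    exact (Finset.sum_subset (Finset.subset_univ I)
      (fun x _ hx => by rw [hc x hx, zero_smul])).symm
  have key : ∑ i : ↥I, cI i = φ' (eqv cI) := by
    show ∑ i : ↥I, cI i = φ (eqv cI)
    show ∑ i : ↥I, cI i = sumL (eqv.symm (eqv cI))
    rw [LinearEquiv.symm_apply_apply]
    rfl
  have hnorm : ‖eqv cI‖ = ‖T cI‖ := rfl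
  rw [hsum1, hsum2, key]
  calc |φ' (eqv cI)| ≤ ‖φ'‖ * ‖eqv cI‖ := φ'.le_opNorm _
    _ = ‖φ'‖ * ‖T cI‖ := by rw [hnorm]
    _ ≤ (‖φ'‖ + 1) * ‖T cI‖ := by
        have := norm_nonneg (T cI)
        nlinarith
  
lemma bound_glob {n k : ℕ} (h : Fin k → (Fin n → ℝ)) :
    ∃ C : ℝ, 0 < C ∧ ∀ s : Fin k → ℝ,
      LinearIndependent ℝ (fun i : {i // s i ≠ 0} => h i.1) →
      |∑ i, s i| ≤ C * ‖∑ i, s i • h i‖ := by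
  classical
  have hCI : ∀ I : Finset (Fin k), ∃ C : ℝ, 0 < C ∧
      (LinearIndependent ℝ (fun i : ↥I => h i.1) → ∀ c : Fin k → ℝ,
        (∀ i, i ∉ I → c i = 0) → |∑ i, c i| ≤ C * ‖∑ i, c i • h i‖) := by
    intro I
    by_cases hli : LinearIndependent ℝ (fun i : ↥I => h i.1)
    · obtain ⟨C, hC1, hC2⟩ := bound_aux h I hli
      exact ⟨C, hC1, fun _ => hC2⟩
    · exact ⟨1, one_pos, fun hli2 => absurd hli2 hli⟩
  choose CI hCI1 hCI2 using hCI
  set C : ℝ := ((Finset.univ : Finset (Finset (Fin k))).image CI).max'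
    (Finset.Nonempty.image ⟨∅, Finset.mem_univ _⟩ CI) with hC
  have hCge : ∀ I, CI I ≤ C :=
    fun I => Finset.le_max' _ _ (Finset.mem_image_of_mem CI (Finset.mem_univ I))
  refine ⟨C, lt_of_lt_of_le (hCI1 ∅) (hCge ∅), ?_⟩
  intro s hs
  set I : Finset (Fin k) := Finset.univ.filter fun i => s i ≠ 0 with hI
  have heq : (fun i : ↥I => h i.1) =
      (fun i : {i // s i ≠ 0} => h i.1) ∘ (Equiv.subtypeEquivRight
        (fun i => by simp [hI])) := rfl
  have hliI : LinearIndependent ℝ (fun i : ↥I => h i.1) := by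
    rw [heq]
    exact hs.comp _ (Equiv.injective _)
  have := hCI2 I hliI s (fun i hi => by
    by_contra hne
    exact hi (by simp [hI, hne]))
  calc |∑ i, s i| ≤ CI I * ‖∑ i, s i • h i‖ := this
    _ ≤ C * ‖∑ i, s i • h i‖ :=
        mul_le_mul_of_nonneg_right (hCge I) (norm_nonneg _)

/-- near an extreme point `v` of `N(g)`, the Newton polyhedron
coincides with its tangent cone `C = v + cone(N(g) - v)` at `v`: there is an
open ball `B` centered at `p v = v.1` (forgetting the vertical coordinate)
such that `p⁻¹(B) ∩ N(g) = p⁻¹(B) ∩ C`. -/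
theorem newton_eq_tangentCone_near_vertex {n : ℕ} (g : TropPoly n)
    (v : (Fin n → ℝ) × ℝ) (hv : v ∈ Set.extremePoints ℝ g.newton) :
    ∃ ε : ℝ, 0 < ε ∧
      (Prod.fst ⁻¹' Metric.ball v.1 ε) ∩ g.newton =
        (Prod.fst ⁻¹' Metric.ball v.1 ε) ∩
          ((fun y => v + y) '' coneGen ((fun z => z - v) '' g.newton)) := by
  classical
  obtain ⟨i0, hi0⟩ := g.vertex_eq_pt v hv
  obtain ⟨f, hf1, hf2⟩ := g.exists_sep v hv
  obtain ⟨C, hC0, hCb⟩ := bound_glob (fun i => (g.pt i - v).1)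
  refine ⟨1/C, by positivity, ?_⟩
  apply Set.eq_of_subset_of_subset
  · rintro x ⟨hx1, hx2⟩
    refine ⟨hx1, x - v, ⟨1, fun _ => 1, fun _ => x - v,
      fun _ => zero_le_one, fun _ => ⟨x, hx2, rfl⟩, by simp⟩, by show v + (x - v) = x; abel⟩
  · rintro x ⟨hx1, y, hy, rfl⟩
    refine ⟨hx1, ?_⟩
    obtain ⟨m, t, p, ht0, hp, hyeq⟩ := hy
    choose z hz1 hz2 using hp
    have hz1' : ∀ i, z i ∈ {z | ∃ (lam : Fin g.k → ℝ) (mu : ℝ),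
        (∀ j, 0 ≤ lam j) ∧ (∑ j, lam j = 1) ∧ 0 ≤ mu ∧
        z = ∑ j, lam j • g.pt j + mu • ((0, 1) : (Fin n → ℝ) × ℝ)} := by
      intro i
      rw [← g.newton_rep]
      exact hz1 i
    choose lam mu hlam0 hlam1 hmu0 hzeq using hz1'
    set s : Fin g.k → ℝ := fun j => ∑ i, t i * lam i j with hs
    set r : ℝ := ∑ i, t i * mu i with hr
    have hpi : ∀ i, p i = ∑ j, lam i j • (g.pt j - v) + mu i • ((0,1) : (Fin n → ℝ) × ℝ) := by
      intro i
      rw [← hz2 i, hzeq i]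
      have hla : ∑ j, lam i j • (g.pt j - v) = ∑ j, lam i j • g.pt j - v := by
        simp only [smul_sub, Finset.sum_sub_distrib]
        rw [← Finset.sum_smul, hlam1 i, one_smul]
      rw [hla]
      abel
    have hy2 : y = ∑ j, s j • (g.pt j - v) + r • ((0,1) : (Fin n → ℝ) × ℝ) := by
      rw [hyeq, Finset.sum_congr rfl (fun i _ => by rw [hpi i])]
      simp only [smul_add, Finset.smul_sum, smul_smul, Finset.sum_add_distrib]
      congr 1
      · rw [Finset.sum_comm]
        apply Finset.sum_congr rfl
        intro j _
        rw [← Finset.sum_smul]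
      · rw [← Finset.sum_smul]
    have hs0 : ∀ j, 0 ≤ s j :=
      fun j => Finset.sum_nonneg fun i _ => mul_nonneg (ht0 i) (hlam0 i j)
    set s0 : Fin g.k → ℝ := fun j => if g.pt j = v then 0 else s j with hs0def
    have hs00 : ∀ j, 0 ≤ s0 j := by
      intro j
      by_cases hj : g.pt j = v <;> simp [hs0def, hj, hs0 j]
    have hs0supp : ∀ j, s0 j ≠ 0 → g.pt j ≠ v := by
      intro j hj
      by_contra h
      exact hj (by simp [hs0def, h])
    have hs0sum : ∑ j, s0 j • (g.pt j - v) = ∑ j, s j • (g.pt j - v) := by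
      apply Finset.sum_congr rfl
      intro j _
      by_cases hj : g.pt j = v
      · rw [hj, sub_self, smul_zero, smul_zero]
      · simp [hs0def, hj]
    obtain ⟨s', r'', a1, a2, a3, a4, a5⟩ := descent (fun i => g.pt i - v)
      (fun i => g.pt i ≠ v) f hf1 hf2
      (Finset.univ.filter fun i => s0 i ≠ 0).card s0 (le_refl _) hs00 hs0supp
    have hy3 : y = ∑ j, s' j • (g.pt j - v) + (r'' + r) • ((0,1) : (Fin n → ℝ) × ℝ) := by
      rw [hy2, ← hs0sum, ← a4]
      rw [add_smul]
      abel
    -- horizontal estimate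
    have hnormy : ‖y.1‖ < 1/C := by
      have h1 : (v + y).1 ∈ Metric.ball v.1 (1/C) := hx1
      rw [Prod.fst_add, Metric.mem_ball, dist_eq_norm, add_sub_cancel_left] at h1
      exact h1
    have hy1eq : y.1 = ∑ j, s' j • (g.pt j - v).1 := by
      rw [hy3, Prod.fst_add, Prod.fst_sum]
      simp [Prod.smul_fst]
    have hTle : ∑ j, s' j ≤ 1 := by
      have hb := hCb s' a5
      have h2 : ∑ j, s' j ≤ |∑ j, s' j| := le_abs_self _
      have h3 : ‖∑ j, s' j • (g.pt j - v).1‖ < 1/C := by rw [← hy1eq]; exact hnormy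
      have h4 : C * ‖∑ j, s' j • (g.pt j - v).1‖ < C * (1/C) :=
        mul_lt_mul_of_pos_left h3 hC0
      rw [mul_one_div_cancel (ne_of_gt hC0)] at h4
      linarith
    -- membership in newton
    rw [g.newton_rep]
    set T : ℝ := ∑ j, s' j with hT
    refine ⟨fun j => s' j + if j = i0 then 1 - T else 0, r'' + r, ?_, ?_, ?_, ?_⟩
    · intro j
      by_cases hj : j = i0
      · subst hj
        show 0 ≤ s' j + if j = j then 1 - T else 0
        rw [if_pos rfl]
        have h5 := a1 j
        linarith
      · simp only [if_neg hj, add_zero]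
        exact a1 j
    · rw [Finset.sum_add_distrib, Finset.sum_ite_eq' Finset.univ i0]
      simp [hT]
    · have : 0 ≤ r := Finset.sum_nonneg fun i _ => mul_nonneg (ht0 i) (hmu0 i)
      linarith
    · have hlampt : ∑ j, (s' j + if j = i0 then 1 - T else 0) • g.pt j
          = ∑ j, s' j • g.pt j + (1 - T) • g.pt i0 := by
        simp only [add_smul, ite_smul, zero_smul, Finset.sum_add_distrib,
          Finset.sum_ite_eq' Finset.univ i0]
        simp
      rw [hlampt, hy3, ← hi0]
      have hsub : ∑ j, s' j • (g.pt j - v) = ∑ j, s' j • g.pt j - T • v := by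
        simp only [smul_sub, Finset.sum_sub_distrib]
        rw [← Finset.sum_smul]
      rw [hsub, sub_smul, one_smul]
      abel
end
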